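/- arXiv:2108.05177 — 9 statements merged into one kernel-verified Lean document; each statement's English description precedes it below -/
import Mathlib

section
/- Let d ≥ 1 be an integer, λ > 0 and ε ∈ (0,1]. Let A be a real d×d matrix, b ∈ ℝ^d, and c ≥ 0 a real number such that the triple (A, b, c) satisfies the Cordes condition with parameters λ and ε, and let γ be the associated normalization factor. Then |γA − I_d|² + γ²|b|²/(2λ) + (γc/λ − 1)² ≤ 1 − ε, where I_d is the d×d identity matrix. -/
/-- The squared Frobenius norm of a real `d × d` matrix. -/
noncomputable def frobSq {d : ℕ} (A : Matrix (Fin d) (Fin d) ℝ) : ℝ :=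
  ∑ i, ∑ j, (A i j) ^ 2

/-- The squared Euclidean norm of a vector in `ℝ^d`. -/
noncomputable def euclidSq {d : ℕ} (b : Fin d → ℝ) : ℝ := ∑ i, (b i) ^ 2

/-- The Cordes condition for the triple `(A, b, c)` with parameters `lam` and `ε`. -/
def CordesCond {d : ℕ} (lam ε : ℝ) (A : Matrix (Fin d) (Fin d) ℝ)
    (b : Fin d → ℝ) (c : ℝ) : Prop :=
  0 < Matrix.trace A + c / lam ∧
    (frobSq A + euclidSq b / (2 * lam) + (c / lam) ^ 2) /
        (Matrix.trace A + c / lam) ^ 2 ≤ 1 / (d + ε)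

/-- The normalization factor `γ` associated to a Cordes triple. -/
noncomputable def cordesGamma {d : ℕ} (lam : ℝ) (A : Matrix (Fin d) (Fin d) ℝ)
    (b : Fin d → ℝ) (c : ℝ) : ℝ :=
  (Matrix.trace A + c / lam) / (frobSq A + euclidSq b / (2 * lam) + (c / lam) ^ 2)

/-- If `(A, b, c)` satisfies the Cordes condition with parameters `λ > 0` and
`ε ∈ (0,1]`, and `γ` is the associated normalization factor, then
`|γA − I|² + γ²|b|²/(2λ) + (γc/λ − 1)² ≤ 1 − ε`. -/
theorem cordes_normalized_bound {d : ℕ} (hd : 1 ≤ d) (lam ε : ℝ)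
    (hlam : 0 < lam) (hε : ε ∈ Set.Ioc (0 : ℝ) 1)
    (A : Matrix (Fin d) (Fin d) ℝ) (b : Fin d → ℝ) (c : ℝ) (hc : 0 ≤ c)
    (hcordes : CordesCond lam ε A b c) :
    frobSq (cordesGamma lam A b c • A - 1) +
      (cordesGamma lam A b c) ^ 2 * euclidSq b / (2 * lam) +
      (cordesGamma lam A b c * c / lam - 1) ^ 2 ≤ 1 - ε := by
  obtain ⟨hε0, hε1⟩ := hε
  obtain ⟨hT, hS⟩ := hcordes
  set T : ℝ := Matrix.trace A + c / lam with hTdef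
  set S : ℝ := frobSq A + euclidSq b / (2 * lam) + (c / lam) ^ 2 with hSdef
  have hγ : cordesGamma lam A b c = T / S := rfl
  clear_value T S
  have hfA : 0 ≤ frobSq A :=
    Finset.sum_nonneg fun i _ => Finset.sum_nonneg fun j _ => sq_nonneg _
  have heb : 0 ≤ euclidSq b := Finset.sum_nonneg fun i _ => sq_nonneg _
  have hSnn : 0 ≤ S := by
    have : 0 ≤ euclidSq b / (2 * lam) := div_nonneg heb (by linarith)
    have := sq_nonneg (c / lam); simp only [hSdef]; linarith
  have hSpos : 0 < S := by
    rcases hSnn.lt_or_eq with h | h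
    · exact h
    · exfalso
      have h1 : frobSq A = 0 := by
        have h2 : 0 ≤ euclidSq b / (2 * lam) := div_nonneg heb (by linarith)
        have h3 := sq_nonneg (c / lam)
        linarith [hSdef, heb, hfA, sq_nonneg (c/lam), div_nonneg heb (by linarith : (0:ℝ) ≤ 2*lam)]
      have h4 : (c / lam) ^ 2 = 0 := by
        have h2 : 0 ≤ euclidSq b / (2 * lam) := div_nonneg heb (by linarith)
        linarith [hSdef, heb, hfA, sq_nonneg (c/lam), div_nonneg heb (by linarith : (0:ℝ) ≤ 2*lam)]
      have hA0 : ∀ i j, A i j = 0 := by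
        intro i j
        have := (Finset.sum_eq_zero_iff_of_nonneg
          (fun i _ => Finset.sum_nonneg fun j _ => sq_nonneg (A i j))).mp h1 i
          (Finset.mem_univ i)
        have := (Finset.sum_eq_zero_iff_of_nonneg
          (fun j _ => sq_nonneg (A i j))).mp this j (Finset.mem_univ j)
        exact pow_eq_zero_iff (by norm_num) |>.mp this
      have htr : Matrix.trace A = 0 := by
        simp [Matrix.trace, Matrix.diag]
        exact Finset.sum_eq_zero fun i _ => hA0 i i
      have hcl : c / lam = 0 := pow_eq_zero_iff (by norm_num) |>.mp h4
      rw [hTdef, htr, hcl] at hT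
      simp at hT
  set γ : ℝ := T / S with hγdef
  -- frobSq expansion
  have hfrob : frobSq (γ • A - 1) = γ ^ 2 * frobSq A - 2 * γ * Matrix.trace A + d := by
    unfold frobSq
    have : ∀ i j : Fin d, ((γ • A - 1) i j) ^ 2
        = γ ^ 2 * (A i j) ^ 2 - 2 * γ * (if i = j then A i j else 0)
          + (if i = j then (1 : ℝ) else 0) := by
      intro i j
      simp only [Matrix.sub_apply, Matrix.smul_apply, Matrix.one_apply, smul_eq_mul]
      split <;> ring
    simp only [this, Finset.sum_add_distrib, Finset.sum_sub_distrib,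
      ← Finset.mul_sum, Finset.sum_ite_eq, Finset.mem_univ, if_true]
    rw [Matrix.trace]
    simp [Matrix.diag, frobSq, Finset.mul_sum]
    try ring
  have hexp : frobSq (γ • A - 1) + γ ^ 2 * euclidSq b / (2 * lam)
      + (γ * c / lam - 1) ^ 2 = γ ^ 2 * S - 2 * γ * T + (d + 1) := by
    rw [hfrob, hSdef, hTdef]
    field_simp
    try ring
  rw [hγ, hexp]
  have hdε : (0 : ℝ) < d + ε := by positivity
  have hT2 : (0 : ℝ) < T ^ 2 := by positivity
  have hkey : (d + ε) * S ≤ T ^ 2 := by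
    rw [div_le_div_iff₀ hT2 hdε] at hS
    linarith
  have hfinal : γ ^ 2 * S - 2 * γ * T + ((d : ℝ) + 1)
      = (d : ℝ) + 1 - T ^ 2 / S := by
    rw [hγdef]
    field_simp
    try ring
  rw [hfinal]
  have : (d : ℝ) + ε ≤ T ^ 2 / S := (le_div_iff₀ hSpos).mpr (by linarith)
  linarith
end

section
/- Let d ≥ 1 be an integer, λ > 0 and ε ∈ (0,1]. Let A be a real d×d matrix, b ∈ ℝ^d, and c ≥ 0 a real number such that the triple (A, b, c) satisfies the Cordes condition with parameters λ and ε, and let γ be the associated normalization factor. Then for every real d×d matrix M, every p ∈ ℝ^d and every r ∈ ℝ, one has |γ(A:M + b·p − c r) − (tr M − λ r)| ≤ √(1−ε) · (|M|² + 2λ|p|² + λ²r²)^{1/2}. -/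
/-- The Frobenius inner product `A : M = ∑ᵢⱼ Aᵢⱼ Mᵢⱼ`. -/
noncomputable def frobInner {d : ℕ} (A M : Matrix (Fin d) (Fin d) ℝ) : ℝ :=
  ∑ i, ∑ j, A i j * M i j

/-- The Euclidean inner product on `ℝ^d`. -/
noncomputable def dotProd {d : ℕ} (b p : Fin d → ℝ) : ℝ := ∑ i, b i * p i

set_option maxHeartbeats 1600000 in
/-- Pointwise form of the key property of the Cordes condition: for a Cordes
triple `(A, b, c)` with normalization factor `γ`, for every matrix `M`,
vector `p` and scalar `r`,
`|γ(A:M + b·p − c r) − (tr M − λ r)| ≤ √(1−ε) (|M|² + 2λ|p|² + λ²r²)^{1/2}`. -/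
theorem cordes_pointwise_estimate {d : ℕ} (hd : 1 ≤ d) (lam ε : ℝ)
    (hlam : 0 < lam) (hε : ε ∈ Set.Ioc (0 : ℝ) 1)
    (A : Matrix (Fin d) (Fin d) ℝ) (b : Fin d → ℝ) (c : ℝ) (hc : 0 ≤ c)
    (hcordes : CordesCond lam ε A b c)
    (M : Matrix (Fin d) (Fin d) ℝ) (p : Fin d → ℝ) (r : ℝ) :
    |cordesGamma lam A b c * (frobInner A M + dotProd b p - c * r) -
        (Matrix.trace M - lam * r)| ≤
      Real.sqrt (1 - ε) *
        Real.sqrt (frobSq M + 2 * lam * euclidSq p + lam ^ 2 * r ^ 2) := by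
  classical
  obtain ⟨hτ, hcond⟩ := hcordes
  have hfA : 0 ≤ frobSq A := Finset.sum_nonneg fun i _ =>
    Finset.sum_nonneg fun j _ => sq_nonneg _
  have heb : 0 ≤ euclidSq b := Finset.sum_nonneg fun i _ => sq_nonneg _
  have hebd : 0 ≤ euclidSq b / (2 * lam) := by positivity
  set Q : ℝ := frobSq A + euclidSq b / (2 * lam) + (c / lam) ^ 2 with hQdef
  set τ : ℝ := Matrix.trace A + c / lam with hτdef
  have hQnn : 0 ≤ Q := by positivity
  have hQ0 : 0 < Q := by
    rcases hQnn.lt_or_eq with h | h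
    · exact h
    · exfalso
      have h' : frobSq A + euclidSq b / (2 * lam) + (c / lam) ^ 2 = 0 := by
        rw [← hQdef]; linarith
      have h1 : frobSq A = 0 := by nlinarith [sq_nonneg (c / lam)]
      have hc0 : c / lam = 0 := by nlinarith [sq_nonneg (c / lam)]
      have hA0 : ∀ i : Fin d, A i i = 0 := by
        intro i
        rw [frobSq] at h1
        have h2 := (Finset.sum_eq_zero_iff_of_nonneg (fun i _ =>
          Finset.sum_nonneg fun j _ => sq_nonneg (A i j))).mp h1 i (Finset.mem_univ i)
        have h3 := (Finset.sum_eq_zero_iff_of_nonneg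
          (fun j _ => sq_nonneg (A i j))).mp h2 i (Finset.mem_univ i)
        nlinarith [sq_nonneg (A i i)]
      have htr : Matrix.trace A = 0 := by
        simp only [Matrix.trace, Matrix.diag]
        exact Finset.sum_eq_zero fun i _ => hA0 i
      rw [hτdef, htr, hc0] at hτ
      simp at hτ
  have hγval : cordesGamma lam A b c = τ / Q := rfl
  clear_value Q τ
  set γ : ℝ := cordesGamma lam A b c with hγdef
  have hγ : γ = τ / Q := hγval
  clear_value γ
  set s : ℝ := Real.sqrt (2 * lam) with hsdef
  have hs2 : s ^ 2 = 2 * lam := Real.sq_sqrt (by positivity)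
  have hs0 : s ≠ 0 := by intro h; rw [h] at hs2; nlinarith
  clear_value s
  set F : (Fin d × Fin d) ⊕ (Fin d ⊕ Unit) → ℝ :=
    Sum.elim (fun ij => γ * A ij.1 ij.2 - if ij.1 = ij.2 then 1 else 0)
      (Sum.elim (fun i => γ * b i / s) fun _ => γ * (c / lam) - 1) with hFdef
  set G : (Fin d × Fin d) ⊕ (Fin d ⊕ Unit) → ℝ :=
    Sum.elim (fun ij => M ij.1 ij.2)
      (Sum.elim (fun i => s * p i) fun _ => -(lam * r)) with hGdef
  have hFG : ∑ x, F x * G x =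
      γ * (frobInner A M + dotProd b p - c * r) - (Matrix.trace M - lam * r) := by
    rw [Fintype.sum_sum_type, Fintype.sum_sum_type, Fintype.sum_prod_type]
    simp only [hFdef, hGdef, Sum.elim_inl, Sum.elim_inr]
    have e1 : ∀ i : Fin d, ∑ j, (γ * A i j - (if i = j then 1 else 0)) * M i j
        = γ * (∑ j, A i j * M i j) - M i i := by
      intro i
      rw [Finset.mul_sum]
      simp only [sub_mul, ite_mul, one_mul, zero_mul, Finset.sum_sub_distrib,
        Finset.sum_ite_eq, Finset.mem_univ, if_true, mul_assoc]
    have e2 : ∀ i : Fin d, (γ * b i / s) * (s * p i) = γ * (b i * p i) := by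
      intro i; field_simp
    have e3 : (γ * (c / lam) - 1) * (-(lam * r)) = -(γ * (c * r)) + lam * r := by
      field_simp; ring
    simp only [e1, e2, e3, Finset.sum_sub_distrib, ← Finset.mul_sum,
      Fintype.sum_unique]
    rw [frobInner, dotProd, Matrix.trace]
    simp only [Matrix.diag]
    ring
  have hF2 : ∑ x, F x ^ 2 = γ ^ 2 * Q - 2 * γ * τ + ((d : ℝ) + 1) := by
    rw [Fintype.sum_sum_type, Fintype.sum_sum_type, Fintype.sum_prod_type]
    simp only [hFdef, Sum.elim_inl, Sum.elim_inr]
    have e1 : ∀ i : Fin d, ∑ j, (γ * A i j - (if i = j then 1 else 0)) ^ 2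
        = γ ^ 2 * (∑ j, A i j ^ 2) - 2 * γ * A i i + 1 := by
      intro i
      rw [Finset.mul_sum]
      have e0 : ∀ j : Fin d, (γ * A i j - (if i = j then 1 else 0)) ^ 2
          = γ ^ 2 * A i j ^ 2 - (if i = j then 2 * γ * A i j else 0)
            + (if i = j then 1 else 0) := by
        intro j; by_cases h : i = j <;> simp [h] <;> ring
      simp only [e0, Finset.sum_add_distrib, Finset.sum_sub_distrib,
        Finset.sum_ite_eq, Finset.mem_univ, if_true]
    have e2 : ∀ i : Fin d, (γ * b i / s) ^ 2 = γ ^ 2 / (2 * lam) * b i ^ 2 := by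
      intro i
      rw [div_pow, mul_pow, hs2]
      ring
    simp only [e1, e2, Finset.sum_add_distrib, Finset.sum_sub_distrib,
      ← Finset.mul_sum, Finset.sum_const, Finset.card_univ, Fintype.card_fin,
      nsmul_eq_mul, Fintype.sum_unique, Fintype.card_unit, Nat.cast_one]
    rw [hQdef, hτdef, frobSq, euclidSq, Matrix.trace]
    simp only [Matrix.diag]
    field_simp
    ring
  have hG2 : ∑ x, G x ^ 2 = frobSq M + 2 * lam * euclidSq p + lam ^ 2 * r ^ 2 := by
    rw [Fintype.sum_sum_type, Fintype.sum_sum_type, Fintype.sum_prod_type]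
    simp only [hGdef, Sum.elim_inl, Sum.elim_inr]
    have e2 : ∀ i : Fin d, (s * p i) ^ 2 = 2 * lam * p i ^ 2 := by
      intro i; rw [mul_pow, hs2]
    simp only [e2, ← Finset.mul_sum, Fintype.sum_unique]
    rw [frobSq, euclidSq]
    ring
  clear_value F G
  have hτ2 : (0:ℝ) < τ ^ 2 := by positivity
  have hdε : (0:ℝ) < (d:ℝ) + ε := by
    have := hε.1; positivity
  have hF2le : ∑ x, F x ^ 2 ≤ 1 - ε := by
    rw [hF2, hγ]
    have hQτ : Q * ((d:ℝ) + ε) ≤ τ ^ 2 := by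
      rw [div_le_div_iff₀ hτ2 hdε] at hcond
      linarith
    have key : (d:ℝ) + ε ≤ τ ^ 2 / Q := (le_div_iff₀ hQ0).mpr (by linarith)
    have e : (τ / Q) ^ 2 * Q - 2 * (τ / Q) * τ + ((d:ℝ) + 1)
        = (d:ℝ) + 1 - τ ^ 2 / Q := by
      field_simp; ring
    rw [e]; linarith
  have hGnn : 0 ≤ frobSq M + 2 * lam * euclidSq p + lam ^ 2 * r ^ 2 := by
    have h1 : 0 ≤ frobSq M := Finset.sum_nonneg fun i _ =>
      Finset.sum_nonneg fun j _ => sq_nonneg _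
    have h2 : 0 ≤ euclidSq p := Finset.sum_nonneg fun i _ => sq_nonneg _
    have h3 : (0:ℝ) ≤ lam ^ 2 * r ^ 2 := by positivity
    have h4 : (0:ℝ) ≤ 2 * lam * euclidSq p := by positivity
    linarith
  have hεle : (0:ℝ) ≤ 1 - ε := by linarith [hε.2]
  have key := Finset.sum_mul_sq_le_sq_mul_sq Finset.univ F G
  rw [hFG, hG2] at key
  have key2 : (γ * (frobInner A M + dotProd b p - c * r) -
      (Matrix.trace M - lam * r)) ^ 2 ≤
      (1 - ε) * (frobSq M + 2 * lam * euclidSq p + lam ^ 2 * r ^ 2) :=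
    key.trans (mul_le_mul_of_nonneg_right hF2le hGnn)
  calc |γ * (frobInner A M + dotProd b p - c * r) - (Matrix.trace M - lam * r)|
      = Real.sqrt ((γ * (frobInner A M + dotProd b p - c * r) -
          (Matrix.trace M - lam * r)) ^ 2) := (Real.sqrt_sq_eq_abs _).symm
    _ ≤ Real.sqrt ((1 - ε) * (frobSq M + 2 * lam * euclidSq p + lam ^ 2 * r ^ 2)) :=
        Real.sqrt_le_sqrt key2
    _ = _ := Real.sqrt_mul hεle _
end

section
/- Let d ≥ 1 be an integer, λ > 0, ε ∈ (0,1], and let Λ be a nonempty compact topological space. Let α ↦ A^α (real d×d matrices), α ↦ b^α ∈ ℝ^d, α ↦ c^α ∈ [0,∞) and α ↦ f^α ∈ ℝ be continuous maps such that for every α ∈ Λ the triple (A^α, b^α, c^α) satisfies the Cordes condition with parameters λ and ε, and let γ^α be the associated normalization factor. For i = 1, 2 let M_i be a real d×d matrix, p_i ∈ ℝ^d and r_i ∈ ℝ, and set F_i := sup_{α∈Λ} ( γ^α (A^α:M_i + b^α·p_i − c^α r_i) − γ^α f^α ), which is finite (attained) by compactness and continuity. Then |F_1 − F_2 − ( tr(M_1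 − M_2) − λ(r_1 − r_2) )| ≤ √(1−ε) · ( |M_1 − M_2|² + 2λ|p_1 − p_2|² + λ²(r_1 − r_2)² )^{1/2}. -/
lemma frobSq_nonneg {d : ℕ} (A : Matrix (Fin d) (Fin d) ℝ) : 0 ≤ frobSq A :=
  Finset.sum_nonneg fun _ _ => Finset.sum_nonneg fun _ _ => sq_nonneg _

lemma euclidSq_nonneg {d : ℕ} (b : Fin d → ℝ) : 0 ≤ euclidSq b :=
  Finset.sum_nonneg fun _ _ => sq_nonneg _

lemma cordes_S_pos {d : ℕ} {lam ε : ℝ} (hlam : 0 < lam)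
    {A : Matrix (Fin d) (Fin d) ℝ} {b : Fin d → ℝ} {c : ℝ}
    (h : CordesCond lam ε A b c) :
    0 < frobSq A + euclidSq b / (2 * lam) + (c / lam) ^ 2 := by
  have h1 : 0 ≤ frobSq A := frobSq_nonneg A
  have h2 : 0 ≤ euclidSq b / (2 * lam) := by
    have := euclidSq_nonneg b; positivity
  have h3 : 0 ≤ (c / lam) ^ 2 := sq_nonneg _
  rcases lt_or_eq_of_le (by linarith : (0:ℝ) ≤ frobSq A + euclidSq b / (2 * lam) + (c / lam) ^ 2)
    with hlt | heq
  · exact hlt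
  · exfalso
    have hfA : frobSq A = 0 := by linarith
    have hcl : (c / lam) ^ 2 = 0 := by linarith
    have hc0 : c / lam = 0 := by
      exact pow_eq_zero_iff (n := 2) (by norm_num) |>.mp hcl
    have hAij : ∀ i ∈ Finset.univ, ∑ j, (A i j) ^ 2 = 0 := by
      rw [frobSq] at hfA
      intro i hi
      exact (Finset.sum_eq_zero_iff_of_nonneg
        (fun _ _ => Finset.sum_nonneg fun _ _ => sq_nonneg _)).mp hfA i hi
    have hdiag : ∀ i : Fin d, A i i = 0 := by
      intro i
      have := (Finset.sum_eq_zero_iff_of_nonneg (fun _ _ => sq_nonneg _)).mp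
        (hAij i (Finset.mem_univ i)) i (Finset.mem_univ i)
      exact pow_eq_zero_iff (n := 2) (by norm_num) |>.mp this
    have htr : Matrix.trace A = 0 := by
      simp [Matrix.trace, Matrix.diag, hdiag]
    have := h.1
    rw [htr, hc0] at this
    simp at this

/-- Pointwise Cordes estimate via Cauchy–Schwarz. -/
lemma cordes_pointwise {d : ℕ} {lam ε : ℝ} (hlam : 0 < lam) (hε0 : 0 < ε) (hε1 : ε ≤ 1)
    {A : Matrix (Fin d) (Fin d) ℝ} {b : Fin d → ℝ} {c : ℝ}
    (h : CordesCond lam ε A b c) (N : Matrix (Fin d) (Fin d) ℝ) (q : Fin d → ℝ) (s : ℝ) :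
    |cordesGamma lam A b c * (frobInner A N + dotProd b q - c * s) -
        (Matrix.trace N - lam * s)| ≤
      Real.sqrt (1 - ε) *
        Real.sqrt (frobSq N + 2 * lam * euclidSq q + lam ^ 2 * s ^ 2) := by
  obtain ⟨hT, hC⟩ := h
  set S : ℝ := frobSq A + euclidSq b / (2 * lam) + (c / lam) ^ 2 with hSdef
  set T : ℝ := Matrix.trace A + c / lam with hTdef
  have hS0 : 0 < S := cordes_S_pos hlam ⟨hT, hC⟩
  set γ : ℝ := cordesGamma lam A b c with hγdef
  have hγ : γ = T / S := rfl
  set r2 : ℝ := Real.sqrt (2 * lam) with hr2def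
  have hr2sq : r2 ^ 2 = 2 * lam := Real.sq_sqrt (by positivity)
  have hr2pos : 0 < r2 := Real.sqrt_pos.mpr (by positivity)
  set u : (Fin d × Fin d) ⊕ (Fin d ⊕ Unit) → ℝ :=
    Sum.elim (fun ij => γ * A ij.1 ij.2 - if ij.1 = ij.2 then 1 else 0)
      (Sum.elim (fun i => γ * b i / r2) (fun _ => 1 - γ * (c / lam))) with hudef
  set v : (Fin d × Fin d) ⊕ (Fin d ⊕ Unit) → ℝ :=
    Sum.elim (fun ij => N ij.1 ij.2)
      (Sum.elim (fun i => r2 * q i) (fun _ => lam * s)) with hvdef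
  have huv : ∑ x, u x * v x =
      γ * (frobInner A N + dotProd b q - c * s) - (Matrix.trace N - lam * s) := by
    simp only [hudef, hvdef, Fintype.sum_sum_type, Fintype.sum_prod_type,
      Sum.elim_inl, Sum.elim_inr]
    have e1 : ∑ i : Fin d, ∑ j : Fin d,
        (γ * A i j - if i = j then 1 else 0) * N i j
        = γ * frobInner A N - Matrix.trace N := by
      rw [frobInner, Matrix.trace, Finset.mul_sum, ← Finset.sum_sub_distrib]
      refine Finset.sum_congr rfl fun i _ => ?_
      have expand : ∀ j : Fin d, (γ * A i j - if i = j then 1 else 0) * N i j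
          = γ * (A i j * N i j) - (if i = j then N i j else 0) := by
        intro j
        by_cases hij : i = j <;> simp [hij] <;> ring
      simp only [expand, Finset.sum_sub_distrib, Finset.sum_ite_eq, Finset.mem_univ,
        if_true, ← Finset.mul_sum]
      simp [Matrix.diag]
    have e2 : ∑ i : Fin d, (γ * b i / r2) * (r2 * q i) = γ * dotProd b q := by
      rw [dotProd, Finset.mul_sum]
      refine Finset.sum_congr rfl fun i _ => ?_
      field_simp
    have e3 : ∑ _x : Unit, (1 - γ * (c / lam)) * (lam * s) = lam * s - γ * (c * s) := by
      have : c / lam * lam = c := div_mul_cancel₀ c (ne_of_gt hlam)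
      simp only [Finset.univ_unique, Finset.sum_const, Finset.card_singleton, one_smul]
      field_simp
    rw [e1, e2, e3]
    ring
  have hu2 : ∑ x, u x ^ 2 = γ ^ 2 * S - 2 * γ * T + (d + 1) := by
    simp only [hudef, Fintype.sum_sum_type, Fintype.sum_prod_type,
      Sum.elim_inl, Sum.elim_inr]
    have e1 : ∑ i : Fin d, ∑ j : Fin d, (γ * A i j - if i = j then 1 else 0) ^ 2
        = γ ^ 2 * frobSq A - 2 * γ * Matrix.trace A + d := by
      have key : ∀ i : Fin d, ∑ j : Fin d, (γ * A i j - if i = j then 1 else 0) ^ 2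
          = γ ^ 2 * (∑ j, A i j ^ 2) - 2 * γ * A i i + 1 := by
        intro i
        have expand : ∀ j : Fin d, (γ * A i j - if i = j then 1 else 0) ^ 2
            = γ ^ 2 * A i j ^ 2 - (if i = j then 2 * γ * A i j else 0)
              + (if i = j then 1 else 0) := by
          intro j
          by_cases hij : i = j <;> simp [hij] <;> ring
        simp only [expand, Finset.sum_add_distrib, Finset.sum_sub_distrib,
          Finset.sum_ite_eq, Finset.mem_univ, if_true, ← Finset.mul_sum]
      rw [Finset.sum_congr rfl fun i _ => key i]
      simp only [Finset.sum_add_distrib, Finset.sum_sub_distrib, ← Finset.mul_sum,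
        Finset.sum_const, Finset.card_univ, Fintype.card_fin, nsmul_eq_mul, mul_one]
      rw [frobSq, Matrix.trace]
      simp [Matrix.diag]
    have e2 : ∑ i : Fin d, (γ * b i / r2) ^ 2 = γ ^ 2 * (euclidSq b / (2 * lam)) := by
      rw [euclidSq, Finset.sum_div, Finset.mul_sum]
      refine Finset.sum_congr rfl fun i _ => ?_
      rw [div_pow, mul_pow, hr2sq]
      ring
    have e3 : ∑ _x : Unit, (1 - γ * (c / lam)) ^ 2
        = 1 - 2 * γ * (c / lam) + γ ^ 2 * (c / lam) ^ 2 := by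
      simp only [Finset.univ_unique, Finset.sum_const, Finset.card_singleton, one_smul]
      ring
    rw [e1, e2, e3, hSdef, hTdef]
    ring
  have hv2 : ∑ x, v x ^ 2 = frobSq N + 2 * lam * euclidSq q + lam ^ 2 * s ^ 2 := by
    simp only [hvdef, Fintype.sum_sum_type, Fintype.sum_prod_type,
      Sum.elim_inl, Sum.elim_inr]
    have e2 : ∑ i : Fin d, (r2 * q i) ^ 2 = 2 * lam * euclidSq q := by
      rw [euclidSq, Finset.mul_sum]
      refine Finset.sum_congr rfl fun i _ => ?_
      rw [mul_pow, hr2sq]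
    have e3 : ∑ _x : Unit, (lam * s) ^ 2 = lam ^ 2 * s ^ 2 := by
      simp only [Finset.univ_unique, Finset.sum_const, Finset.card_singleton, one_smul]
      ring
    rw [e2, e3, frobSq]
    ring
  have hdε : (0:ℝ) < d + ε := by positivity
  have hT2 : (0:ℝ) < T ^ 2 := by positivity
  have hST : S * (d + ε) ≤ T ^ 2 := by
    have := (div_le_div_iff₀ hT2 hdε).mp hC
    linarith [this]
  have hu2le : ∑ x, u x ^ 2 ≤ 1 - ε := by
    rw [hu2, hγ]
    have h1 : (T / S) ^ 2 * S = T ^ 2 / S := by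
      field_simp
    have h2 : 2 * (T / S) * T = 2 * (T ^ 2 / S) := by
      field_simp
    rw [h1, h2]
    have h3 : (d:ℝ) + ε ≤ T ^ 2 / S := (le_div_iff₀ hS0).mpr (by linarith)
    linarith
  have hQ : 0 ≤ frobSq N + 2 * lam * euclidSq q + lam ^ 2 * s ^ 2 := by
    have := frobSq_nonneg N
    have := euclidSq_nonneg q
    positivity
  have hCS := Finset.sum_mul_sq_le_sq_mul_sq Finset.univ u v
  have hXsq : (γ * (frobInner A N + dotProd b q - c * s) - (Matrix.trace N - lam * s)) ^ 2
      ≤ (1 - ε) * (frobSq N + 2 * lam * euclidSq q + lam ^ 2 * s ^ 2) := by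
    rw [← huv, ← hv2]
    calc (∑ x, u x * v x) ^ 2 ≤ (∑ x, u x ^ 2) * ∑ x, v x ^ 2 := hCS
      _ ≤ (1 - ε) * ∑ x, v x ^ 2 := by
          apply mul_le_mul_of_nonneg_right hu2le
          rw [hv2]; exact hQ
  calc |γ * (frobInner A N + dotProd b q - c * s) - (Matrix.trace N - lam * s)|
      = Real.sqrt ((γ * (frobInner A N + dotProd b q - c * s)
          - (Matrix.trace N - lam * s)) ^ 2) := (Real.sqrt_sq_eq_abs _).symm
    _ ≤ Real.sqrt ((1 - ε) * (frobSq N + 2 * lam * euclidSq q + lam ^ 2 * s ^ 2)) :=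
        Real.sqrt_le_sqrt hXsq
    _ = Real.sqrt (1 - ε) * Real.sqrt (frobSq N + 2 * lam * euclidSq q + lam ^ 2 * s ^ 2) :=
        Real.sqrt_mul (by linarith) _

/-- Pointwise (linear-algebra) form of the property of the Cordes condition for
Hamilton–Jacobi–Bellman operators: for continuous Cordes data over a nonempty
compact space `Λ`, the Bellman suprema `F₁, F₂` satisfy
`|F₁ − F₂ − (tr(M₁ − M₂) − λ(r₁ − r₂))|
  ≤ √(1−ε) (|M₁ − M₂|² + 2λ|p₁ − p₂|² + λ²(r₁ − r₂)²)^{1/2}`. -/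
theorem cordes_hjb_estimate {d : ℕ} (hd : 1 ≤ d) (lam ε : ℝ)
    (hlam : 0 < lam) (hε : ε ∈ Set.Ioc (0 : ℝ) 1)
    {Λ : Type*} [TopologicalSpace Λ] [CompactSpace Λ] [Nonempty Λ]
    (A : Λ → Matrix (Fin d) (Fin d) ℝ) (b : Λ → Fin d → ℝ) (c f : Λ → ℝ)
    (hA : Continuous A) (hb : Continuous b) (hc : Continuous c)
    (hf : Continuous f) (hcnn : ∀ α, 0 ≤ c α)
    (hcordes : ∀ α, CordesCond lam ε (A α) (b α) (c α))
    (M₁ M₂ : Matrix (Fin d) (Fin d) ℝ) (p₁ p₂ : Fin d → ℝ) (r₁ r₂ : ℝ) :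
    |(⨆ α, (cordesGamma lam (A α) (b α) (c α) *
          (frobInner (A α) M₁ + dotProd (b α) p₁ - c α * r₁) -
        cordesGamma lam (A α) (b α) (c α) * f α)) -
      (⨆ α, (cordesGamma lam (A α) (b α) (c α) *
          (frobInner (A α) M₂ + dotProd (b α) p₂ - c α * r₂) -
        cordesGamma lam (A α) (b α) (c α) * f α)) -
      (Matrix.trace (M₁ - M₂) - lam * (r₁ - r₂))| ≤
      Real.sqrt (1 - ε) *
        Real.sqrt (frobSq (M₁ - M₂) + 2 * lam * euclidSq (fun i => p₁ i - p₂ i) +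
          lam ^ 2 * (r₁ - r₂) ^ 2) := by
  -- continuity ingredients
  have hAij : ∀ i j, Continuous fun α => A α i j := fun i j =>
    (continuous_apply j).comp ((continuous_apply i).comp hA)
  have hbi : ∀ i, Continuous fun α => b α i := fun i => (continuous_apply i).comp hb
  have hγcont : Continuous fun α => cordesGamma lam (A α) (b α) (c α) := by
    have hnum : Continuous fun α => Matrix.trace (A α) + c α / lam := by
      have : Continuous fun α => Matrix.trace (A α) := by
        simp only [Matrix.trace, Matrix.diag]
        exact continuous_finset_sum _ fun i _ => hAij i i
      exact this.add (hc.div_const lam)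
    have hden : Continuous fun α =>
        frobSq (A α) + euclidSq (b α) / (2 * lam) + (c α / lam) ^ 2 := by
      have h1 : Continuous fun α => frobSq (A α) := by
        simp only [frobSq]
        exact continuous_finset_sum _ fun i _ =>
          continuous_finset_sum _ fun j _ => (hAij i j).pow 2
      have h2 : Continuous fun α => euclidSq (b α) := by
        simp only [euclidSq]
        exact continuous_finset_sum _ fun i _ => (hbi i).pow 2
      exact (h1.add (h2.div_const _)).add ((hc.div_const lam).pow 2)
    exact hnum.div hden fun α => ne_of_gt (cordes_S_pos hlam (hcordes α))
  have hg : ∀ (M : Matrix (Fin d) (Fin d) ℝ) (p : Fin d → ℝ) (r : ℝ),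
      Continuous fun α => cordesGamma lam (A α) (b α) (c α) *
        (frobInner (A α) M + dotProd (b α) p - c α * r) -
        cordesGamma lam (A α) (b α) (c α) * f α := by
    intro M p r
    have h1 : Continuous fun α => frobInner (A α) M := by
      simp only [frobInner]
      exact continuous_finset_sum _ fun i _ =>
        continuous_finset_sum _ fun j _ => (hAij i j).mul continuous_const
    have h2 : Continuous fun α => dotProd (b α) p := by
      simp only [dotProd]
      exact continuous_finset_sum _ fun i _ => (hbi i).mul continuous_const
    exact (hγcont.mul ((h1.add h2).sub (hc.mul continuous_const))).sub (hγcont.mul hf)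
  set g₁ := fun α => cordesGamma lam (A α) (b α) (c α) *
      (frobInner (A α) M₁ + dotProd (b α) p₁ - c α * r₁) -
      cordesGamma lam (A α) (b α) (c α) * f α with hg₁def
  set g₂ := fun α => cordesGamma lam (A α) (b α) (c α) *
      (frobInner (A α) M₂ + dotProd (b α) p₂ - c α * r₂) -
      cordesGamma lam (A α) (b α) (c α) * f α with hg₂def
  have hb₁ : BddAbove (Set.range g₁) := (isCompact_range (hg M₁ p₁ r₁)).bddAbove
  have hb₂ : BddAbove (Set.range g₂) := (isCompact_range (hg M₂ p₂ r₂)).bddAbove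
  set K : ℝ := Matrix.trace (M₁ - M₂) - lam * (r₁ - r₂) with hKdef
  set B : ℝ := Real.sqrt (1 - ε) *
      Real.sqrt (frobSq (M₁ - M₂) + 2 * lam * euclidSq (fun i => p₁ i - p₂ i) +
        lam ^ 2 * (r₁ - r₂) ^ 2) with hBdef
  have key : ∀ α, |g₁ α - g₂ α - K| ≤ B := by
    intro α
    have hdiff : g₁ α - g₂ α = cordesGamma lam (A α) (b α) (c α) *
        (frobInner (A α) (M₁ - M₂) + dotProd (b α) (fun i => p₁ i - p₂ i) -
          c α * (r₁ - r₂)) := by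
      have e1 : frobInner (A α) (M₁ - M₂) = frobInner (A α) M₁ - frobInner (A α) M₂ := by
        simp only [frobInner, Matrix.sub_apply, mul_sub, Finset.sum_sub_distrib]
      have e2 : dotProd (b α) (fun i => p₁ i - p₂ i)
          = dotProd (b α) p₁ - dotProd (b α) p₂ := by
        simp only [dotProd, mul_sub, Finset.sum_sub_distrib]
      rw [hg₁def, hg₂def, e1, e2]
      ring
    have := cordes_pointwise hlam hε.1 hε.2 (hcordes α) (M₁ - M₂)
      (fun i => p₁ i - p₂ i) (r₁ - r₂)
    rw [← hdiff] at this
    exact this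
  rw [abs_le]
  have hB0 : 0 ≤ B := by
    rw [hBdef]; positivity
  have h1 : iSup g₁ ≤ iSup g₂ + (K + B) := by
    apply ciSup_le
    intro α
    have hα := key α
    rw [abs_le] at hα
    have h' : g₁ α ≤ g₂ α + (K + B) := by linarith [hα.2]
    exact h'.trans (by linarith [le_ciSup hb₂ α])
  have h2 : iSup g₂ ≤ iSup g₁ + (B - K) := by
    apply ciSup_le
    intro α
    have hα := key α
    rw [abs_le] at hα
    have h' : g₂ α ≤ g₁ α + (B - K) := by linarith [hα.1]
    exact h'.trans (by linarith [le_ciSup hb₁ α])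
  constructor
  · linarith
  · linarith
end

section
/- Let V be a finite-dimensional real inner product space and let A, B, P be linear operators on V with A and P SPD. Suppose there are constants κ > 0, C > 0, α > 0, β > 0 such that for all u, v ∈ V: ⟨Bv, v⟩ ≥ κ⟨Av, v⟩, ⟨Bu, v⟩ ≤ C⟨Au, u⟩^{1/2}⟨Av, v⟩^{1/2}, and α⟨P⁻¹v, v⟩ ≤ ⟨Av, v⟩ ≤ β⟨P⁻¹v, v⟩. Then for all v ∈ V: ⟨P⁻¹(PBv), v⟩ ≥ κα⟨P⁻¹v, v⟩, and ⟨P⁻¹(PBv), PBv⟩^{1/2} ≤ Cβ⟨P⁻¹v, v⟩^{1/2}. In other words, P is an FOV-equivalent (field-of-values-equivalent) preconditioner for B with respect to the inner product induced by P⁻¹, with constants γ = κα and Γ = Cβ. -/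
open scoped RealInnerProductSpace

/-- A linear operator on a real inner product space is SPD if it is
self-adjoint and positive definite. -/
def IsSPD {V : Type*} [NormedAddCommGroup V] [InnerProductSpace ℝ V]
    (T : V →ₗ[ℝ] V) : Prop :=
  (∀ u v : V, ⟪T u, v⟫ = ⟪u, T v⟫) ∧ ∀ v : V, v ≠ 0 → 0 < ⟪T v, v⟫

/-- If `B` is coercive and bounded with respect to the SPD operator `A`, and the
SPD preconditioner `P` is spectrally equivalent to `A` (in the sense that
`α⟨P⁻¹v, v⟩ ≤ ⟨Av, v⟩ ≤ β⟨P⁻¹v, v⟩`), then `P` is an FOV-equivalent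
preconditioner for `B` with constants `γ = κα` and `Γ = Cβ`. -/
theorem fov_equivalent_preconditioner
    {V : Type*} [NormedAddCommGroup V] [InnerProductSpace ℝ V]
    [FiniteDimensional ℝ V]
    (A B P Pinv : V →ₗ[ℝ] V)
    (hA : IsSPD A) (hP : IsSPD P)
    (hPinv₁ : Pinv ∘ₗ P = LinearMap.id) (hPinv₂ : P ∘ₗ Pinv = LinearMap.id)
    (κ C α β : ℝ) (hκ : 0 < κ) (hC : 0 < C) (hα : 0 < α) (hβ : 0 < β)
    (hcoer : ∀ v : V, κ * ⟪A v, v⟫ ≤ ⟪B v, v⟫)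
    (hbdd : ∀ u v : V, ⟪B u, v⟫ ≤
      C * Real.sqrt ⟪A u, u⟫ * Real.sqrt ⟪A v, v⟫)
    (hequiv : ∀ v : V,
      α * ⟪Pinv v, v⟫ ≤ ⟪A v, v⟫ ∧ ⟪A v, v⟫ ≤ β * ⟪Pinv v, v⟫) :
    ∀ v : V,
      κ * α * ⟪Pinv v, v⟫ ≤ ⟪Pinv (P (B v)), v⟫ ∧
      Real.sqrt ⟪Pinv (P (B v)), P (B v)⟫ ≤
        C * β * Real.sqrt ⟪Pinv v, v⟫ := by
  have hPP : ∀ x : V, Pinv (P x) = x := fun x => LinearMap.congr_fun hPinv₁ x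
  have hPnn : ∀ x : V, 0 ≤ ⟪P x, x⟫ := by
    intro x
    rcases eq_or_ne x 0 with rfl | hx
    · simp
    · exact (hP.2 x hx).le
  -- nonnegativity of ⟪Pinv x, x⟫
  have hPinvnn : ∀ x : V, 0 ≤ ⟪Pinv x, x⟫ := by
    intro x
    have : ⟪Pinv x, x⟫ = ⟪P (Pinv x), Pinv x⟫ := by
      rw [hP.1]
      congr 1
      exact (LinearMap.congr_fun hPinv₂ x).symm
    rw [this]
    exact hPnn _
  intro v
  constructor
  · rw [hPP]
    have h1 := (hequiv v).1
    have h2 := hcoer v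
    nlinarith [hκ.le, hα.le]
  · rw [hPP]
    set p := ⟪Pinv v, v⟫ with hp
    set w := P (B v) with hw
    have hX : ⟪B v, w⟫ = ⟪Pinv w, w⟫ := by rw [hw, hPP]
    set X := ⟪B v, w⟫ with hXdef
    have hXnn : 0 ≤ X := by
      rw [hXdef, hw, real_inner_comm]; exact hPnn _
    have hpnn : 0 ≤ p := hPinvnn v
    -- bound
    have hb := hbdd v w
    have hAv : ⟪A v, v⟫ ≤ β * p := (hequiv v).2
    have hAw : ⟪A w, w⟫ ≤ β * X := by
      have := (hequiv w).2
      rw [← hX] at this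
      exact this
    have hAvnn : 0 ≤ ⟪A v, v⟫ := by
      rcases eq_or_ne v 0 with rfl | h
      · simp
      · exact (hA.2 v h).le
    have hAwnn : 0 ≤ ⟪A w, w⟫ := by
      rcases eq_or_ne w 0 with h | h
      · rw [h]; simp
      · exact (hA.2 w h).le
    have hs1 : Real.sqrt ⟪A v, v⟫ ≤ Real.sqrt β * Real.sqrt p := by
      rw [← Real.sqrt_mul hβ.le]
      exact Real.sqrt_le_sqrt hAv
    have hs2 : Real.sqrt ⟪A w, w⟫ ≤ Real.sqrt β * Real.sqrt X := by
      rw [← Real.sqrt_mul hβ.le]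
      exact Real.sqrt_le_sqrt hAw
    have key : X ≤ C * β * Real.sqrt p * Real.sqrt X := by
      have h1 : X ≤ C * Real.sqrt ⟪A v, v⟫ * Real.sqrt ⟪A w, w⟫ := hb
      have h2 : C * Real.sqrt ⟪A v, v⟫ * Real.sqrt ⟪A w, w⟫ ≤
          C * (Real.sqrt β * Real.sqrt p) * (Real.sqrt β * Real.sqrt X) :=
        mul_le_mul (mul_le_mul_of_nonneg_left hs1 hC.le) hs2
          (Real.sqrt_nonneg _) (by positivity)
      have h3 : C * (Real.sqrt β * Real.sqrt p) * (Real.sqrt β * Real.sqrt X)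
          = C * β * Real.sqrt p * Real.sqrt X := by
        have : Real.sqrt β * Real.sqrt β = β := Real.mul_self_sqrt hβ.le
        ring_nf
        nlinarith [this]
      linarith [h3 ▸ h2]
    have hsq : Real.sqrt X * Real.sqrt X = X := Real.mul_self_sqrt hXnn
    nlinarith [Real.sqrt_nonneg X, Real.sqrt_nonneg p, hC.le, hβ.le,
      mul_nonneg (mul_nonneg hC.le hβ.le) (Real.sqrt_nonneg p)]
end

section
/- Let V and W be finite-dimensional real inner product spaces. Let A be SPD on V, R̄ SPD on V, R₀ SPD on W, and let Π : W → V be an injective linear map with adjoint Π*. Assume: (stable decomposition) there is c₀ > 0 such that every v ∈ V can be written v = v₁ + Πw with v₁ ∈ V, w ∈ W and ⟨R̄⁻¹v₁, v₁⟩ + ⟨R₀⁻¹w, w⟩ ≤ c₀²⟨Av, v⟩; (boundedness) there are c₁, c₂ > 0 such that ⟨AΠw, Πw⟩ ≤ c₁²⟨R₀⁻¹w, w⟩ for all w ∈ W and ⟨Av, v⟩ ≤ c₂²⟨R̄⁻¹v, v⟩ for all v ∈ V. Define the additive preconditioner P_a := R̄ + Π R₀ Π*. Then for all v ∈ V: c₀⁻²⟨Av,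 v⟩ ≤ ⟨A P_a A v, v⟩ ≤ (c₁² + c₂²)⟨Av, v⟩. -/
open scoped RealInnerProductSpace

lemma cs_psd {V : Type*} [NormedAddCommGroup V] [InnerProductSpace ℝ V]
    (T : V →ₗ[ℝ] V) (hsa : ∀ u v : V, ⟪T u, v⟫ = ⟪u, T v⟫)
    (hpsd : ∀ v : V, 0 ≤ ⟪T v, v⟫) (x y : V) :
    ⟪T x, y⟫ ^ 2 ≤ ⟪T x, x⟫ * ⟪T y, y⟫ := by
  have key : ∀ t : ℝ, 0 ≤ ⟪T y, y⟫ * (t * t) + (2 * ⟪T x, y⟫) * t + ⟪T x, x⟫ := by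
    intro t
    have h := hpsd (x + t • y)
    have hsym : ⟪T y, x⟫ = ⟪T x, y⟫ := by
      rw [hsa y x, real_inner_comm]
    simp only [map_add, map_smul, inner_add_left, inner_add_right,
      real_inner_smul_left, real_inner_smul_right, smul_eq_mul, hsym] at h
    nlinarith [h]
  have := discrim_le_zero key
  rw [discrim] at this
  nlinarith [this]

lemma two_mul_le_of_sq_le (t a b : ℝ) (ha : 0 ≤ a) (hb : 0 ≤ b)
    (h : t ^ 2 ≤ a * b) : 2 * t ≤ a + b := by
  nlinarith [sq_nonneg (a - b), sq_nonneg (a + b - 2 * t), sq_nonneg t]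

lemma sum_cs (s₁ s₂ p₁ p₂ q₁ q₂ : ℝ) (hp₁ : 0 ≤ p₁) (hp₂ : 0 ≤ p₂)
    (hq₁ : 0 ≤ q₁) (hq₂ : 0 ≤ q₂)
    (h₁ : s₁ ^ 2 ≤ p₁ * q₁) (h₂ : s₂ ^ 2 ≤ p₂ * q₂) :
    (s₁ + s₂) ^ 2 ≤ (p₁ + p₂) * (q₁ + q₂) := by
  have hm : (s₁ * s₂) ^ 2 ≤ (p₁ * q₂) * (p₂ * q₁) := by
    nlinarith [mul_le_mul h₁ h₂ (sq_nonneg s₂) (mul_nonneg hp₁ hq₁)]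
  have h3 : 2 * (s₁ * s₂) ≤ p₁ * q₂ + p₂ * q₁ :=
    two_mul_le_of_sq_le _ _ _ (mul_nonneg hp₁ hq₂) (mul_nonneg hp₂ hq₁) hm
  nlinarith [h₁, h₂, h3]

lemma le_of_sq_le_mul (p c a : ℝ) (hp : 0 ≤ p) (ha : 0 ≤ a) (hc : 0 ≤ c)
    (h : p ^ 2 ≤ c * p * a) : p ≤ c * a := by
  rcases hp.eq_or_lt with h0 | h0
  · rw [← h0]; positivity
  · nlinarith

lemma le_of_sq_le_mul' (a c P : ℝ) (ha : 0 ≤ a) (hP : 0 ≤ P) (hc : 0 ≤ c)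
    (h : a ^ 2 ≤ P * (c * a)) : a ≤ c * P := by
  rcases ha.eq_or_lt with h0 | h0
  · rw [← h0]; positivity
  · nlinarith

lemma spd_psd {V : Type*} [NormedAddCommGroup V] [InnerProductSpace ℝ V]
    (T : V →ₗ[ℝ] V) (h : ∀ v : V, v ≠ 0 → 0 < ⟪T v, v⟫) (v : V) :
    0 ≤ ⟪T v, v⟫ := by
  by_cases hv : v = 0
  · simp [hv]
  · exact (h v hv).le

/-- Spectral equivalence of the additive auxiliary space preconditioner
`P_a = R̄ + Π R₀ Π*`: under the stable decomposition and boundedness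
assumptions, `c₀⁻²⟨Av, v⟩ ≤ ⟨A P_a A v, v⟩ ≤ (c₁² + c₂²)⟨Av, v⟩`. -/
theorem additive_preconditioner_spectral_equivalence
    {V : Type*} [NormedAddCommGroup V] [InnerProductSpace ℝ V]
    [FiniteDimensional ℝ V]
    {W : Type*} [NormedAddCommGroup W] [InnerProductSpace ℝ W]
    [FiniteDimensional ℝ W]
    (A Rbar Rbarinv : V →ₗ[ℝ] V) (R0 R0inv : W →ₗ[ℝ] W) (Pi0 : W →ₗ[ℝ] V)
    (hA : IsSPD A) (hRbar : IsSPD Rbar) (hR0 : IsSPD R0)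
    (hPi0 : Function.Injective Pi0)
    (hRbarinv₁ : Rbarinv ∘ₗ Rbar = LinearMap.id)
    (hRbarinv₂ : Rbar ∘ₗ Rbarinv = LinearMap.id)
    (hR0inv₁ : R0inv ∘ₗ R0 = LinearMap.id)
    (hR0inv₂ : R0 ∘ₗ R0inv = LinearMap.id)
    (c₀ c₁ c₂ : ℝ) (hc₀ : 0 < c₀) (hc₁ : 0 < c₁) (hc₂ : 0 < c₂)
    (hstab : ∀ v : V, ∃ v₁ : V, ∃ w : W, v = v₁ + Pi0 w ∧
      ⟪Rbarinv v₁, v₁⟫ + ⟪R0inv w, w⟫ ≤ c₀ ^ 2 * ⟪A v, v⟫)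
    (hbdd₁ : ∀ w : W, ⟪A (Pi0 w), Pi0 w⟫ ≤ c₁ ^ 2 * ⟪R0inv w, w⟫)
    (hbdd₂ : ∀ v : V, ⟪A v, v⟫ ≤ c₂ ^ 2 * ⟪Rbarinv v, v⟫) :
    ∀ v : V,
      c₀⁻¹ ^ 2 * ⟪A v, v⟫ ≤
        ⟪A ((Rbar + Pi0 ∘ₗ R0 ∘ₗ LinearMap.adjoint Pi0) (A v)), v⟫ ∧
      ⟪A ((Rbar + Pi0 ∘ₗ R0 ∘ₗ LinearMap.adjoint Pi0) (A v)), v⟫ ≤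
        (c₁ ^ 2 + c₂ ^ 2) * ⟪A v, v⟫ := by
  obtain ⟨hAsa, hApd⟩ := hA
  obtain ⟨hRsa, hRpd⟩ := hRbar
  obtain ⟨hR0sa, hR0pd⟩ := hR0
  have hApsd := spd_psd A hApd
  have hRpsd := spd_psd Rbar hRpd
  have hR0psd := spd_psd R0 hR0pd
  have hinv₁ : ∀ x : V, Rbarinv (Rbar x) = x := fun x => by
    have := LinearMap.congr_fun hRbarinv₁ x; simpa using this
  have hinv₂ : ∀ x : V, Rbar (Rbarinv x) = x := fun x => by
    have := LinearMap.congr_fun hRbarinv₂ x; simpa using this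
  have hinv₃ : ∀ x : W, R0inv (R0 x) = x := fun x => by
    have := LinearMap.congr_fun hR0inv₁ x; simpa using this
  have hinv₄ : ∀ x : W, R0 (R0inv x) = x := fun x => by
    have := LinearMap.congr_fun hR0inv₂ x; simpa using this
  have hRisa : ∀ x y : V, ⟪Rbarinv x, y⟫ = ⟪x, Rbarinv y⟫ := by
    intro x y
    conv_lhs => rw [show y = Rbar (Rbarinv y) from (hinv₂ y).symm]
    rw [← hRsa, hinv₂]
  have hRipsd : ∀ x : V, 0 ≤ ⟪Rbarinv x, x⟫ := by
    intro x
    have h := hRpsd (Rbarinv x)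
    rw [hinv₂ x] at h
    rwa [real_inner_comm]
  have hR0isa : ∀ x y : W, ⟪R0inv x, y⟫ = ⟪x, R0inv y⟫ := by
    intro x y
    conv_lhs => rw [show y = R0 (R0inv y) from (hinv₄ y).symm]
    rw [← hR0sa, hinv₄]
  have hR0ipsd : ∀ x : W, 0 ≤ ⟪R0inv x, x⟫ := by
    intro x
    have h := hR0psd (R0inv x)
    rw [hinv₄ x] at h
    rwa [real_inner_comm]
  intro v
  have ha0 : (0:ℝ) ≤ ⟪A v, v⟫ := hApsd v
  have hp₁0 : (0:ℝ) ≤ ⟪Rbar (A v), A v⟫ := hRpsd (A v)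
  have hp₂0 : (0:ℝ) ≤ ⟪R0 (LinearMap.adjoint Pi0 (A v)), LinearMap.adjoint Pi0 (A v)⟫ :=
    hR0psd _
  have hexp : ⟪A ((Rbar + Pi0 ∘ₗ R0 ∘ₗ LinearMap.adjoint Pi0) (A v)), v⟫ =
      ⟪Rbar (A v), A v⟫ +
        ⟪R0 (LinearMap.adjoint Pi0 (A v)), LinearMap.adjoint Pi0 (A v)⟫ := by
    have h2 : ⟪Pi0 (R0 (LinearMap.adjoint Pi0 (A v))), A v⟫ =
        ⟪R0 (LinearMap.adjoint Pi0 (A v)), LinearMap.adjoint Pi0 (A v)⟫ :=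
      (LinearMap.adjoint_inner_right Pi0 _ _).symm
    rw [hAsa]
    simp only [LinearMap.add_apply, LinearMap.comp_apply, inner_add_left, h2]
  rw [hexp]
  constructor
  · -- lower bound
    obtain ⟨v₁, w, hv, hstab'⟩ := hstab v
    have hq₁0 : (0:ℝ) ≤ ⟪Rbarinv v₁, v₁⟫ := hRipsd v₁
    have hq₂0 : (0:ℝ) ≤ ⟪R0inv w, w⟫ := hR0ipsd w
    have hsplit : ⟪A v, v⟫ = ⟪A v, v₁⟫ + ⟪LinearMap.adjoint Pi0 (A v), w⟫ := by
      nth_rewrite 2 [hv]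
      rw [inner_add_right, LinearMap.adjoint_inner_left]
    have hcs₁ : ⟪A v, v₁⟫ ^ 2 ≤ ⟪Rbar (A v), A v⟫ * ⟪Rbarinv v₁, v₁⟫ := by
      have h := cs_psd Rbarinv hRisa hRipsd (Rbar (A v)) v₁
      rw [hinv₁] at h
      rwa [real_inner_comm (Rbar (A v)) (A v)] at h
    have hcs₂ : ⟪LinearMap.adjoint Pi0 (A v), w⟫ ^ 2 ≤
        ⟪R0 (LinearMap.adjoint Pi0 (A v)), LinearMap.adjoint Pi0 (A v)⟫ * ⟪R0inv w, w⟫ := by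
      have h := cs_psd R0inv hR0isa hR0ipsd (R0 (LinearMap.adjoint Pi0 (A v))) w
      rw [hinv₃] at h
      rwa [real_inner_comm (R0 (LinearMap.adjoint Pi0 (A v)))
        (LinearMap.adjoint Pi0 (A v))] at h
    have hkey : ⟪A v, v⟫ ^ 2 ≤
        (⟪Rbar (A v), A v⟫ + ⟪R0 (LinearMap.adjoint Pi0 (A v)), LinearMap.adjoint Pi0 (A v)⟫)
          * (c₀ ^ 2 * ⟪A v, v⟫) := by
      calc ⟪A v, v⟫ ^ 2 = (⟪A v, v₁⟫ + ⟪LinearMap.adjoint Pi0 (A v), w⟫) ^ 2 := by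
            rw [hsplit]
        _ ≤ _ * (⟪Rbarinv v₁, v₁⟫ + ⟪R0inv w, w⟫) :=
            sum_cs _ _ _ _ _ _ hp₁0 hp₂0 hq₁0 hq₂0 hcs₁ hcs₂
        _ ≤ _ := mul_le_mul_of_nonneg_left hstab' (by linarith)
    have hfin := le_of_sq_le_mul' _ _ _ ha0 (by linarith) (by positivity) hkey
    rw [inv_pow, inv_mul_le_iff₀ (by positivity)]
    linarith
  · -- upper bound
    have hub₁ : ⟪Rbar (A v), A v⟫ ≤ c₂ ^ 2 * ⟪A v, v⟫ := by
      have hcs := cs_psd A hAsa hApsd (Rbar (A v)) v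
      have heq : ⟪A (Rbar (A v)), v⟫ = ⟪Rbar (A v), A v⟫ := hAsa _ _
      rw [heq] at hcs
      have hb : ⟪A (Rbar (A v)), Rbar (A v)⟫ ≤ c₂ ^ 2 * ⟪Rbar (A v), A v⟫ := by
        have h := hbdd₂ (Rbar (A v))
        rw [hinv₁] at h
        rwa [real_inner_comm (Rbar (A v)) (A v)] at h
      apply le_of_sq_le_mul _ _ _ hp₁0 ha0 (by positivity)
      calc ⟪Rbar (A v), A v⟫ ^ 2 ≤ ⟪A (Rbar (A v)), Rbar (A v)⟫ * ⟪A v, v⟫ := hcs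
        _ ≤ c₂ ^ 2 * ⟪Rbar (A v), A v⟫ * ⟪A v, v⟫ :=
            mul_le_mul_of_nonneg_right hb ha0
    have hub₂ : ⟪R0 (LinearMap.adjoint Pi0 (A v)), LinearMap.adjoint Pi0 (A v)⟫ ≤
        c₁ ^ 2 * ⟪A v, v⟫ := by
      have hcs := cs_psd A hAsa hApsd (Pi0 (R0 (LinearMap.adjoint Pi0 (A v)))) v
      have heq : ⟪A (Pi0 (R0 (LinearMap.adjoint Pi0 (A v)))), v⟫ =
          ⟪R0 (LinearMap.adjoint Pi0 (A v)), LinearMap.adjoint Pi0 (A v)⟫ := by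
        rw [hAsa]
        exact (LinearMap.adjoint_inner_right Pi0 _ _).symm
      rw [heq] at hcs
      have hb : ⟪A (Pi0 (R0 (LinearMap.adjoint Pi0 (A v)))),
          Pi0 (R0 (LinearMap.adjoint Pi0 (A v)))⟫ ≤
          c₁ ^ 2 * ⟪R0 (LinearMap.adjoint Pi0 (A v)), LinearMap.adjoint Pi0 (A v)⟫ := by
        have h := hbdd₁ (R0 (LinearMap.adjoint Pi0 (A v)))
        rw [hinv₃] at h
        rwa [real_inner_comm (R0 (LinearMap.adjoint Pi0 (A v)))
          (LinearMap.adjoint Pi0 (A v))] at h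
      apply le_of_sq_le_mul _ _ _ hp₂0 ha0 (by positivity)
      calc _ ≤ _ * ⟪A v, v⟫ := hcs
        _ ≤ _ := mul_le_mul_of_nonneg_right hb ha0
    linarith
end

section
/- Let V be a finite-dimensional real inner product space, A an SPD operator on V, and R : V → V a linear operator. Define the symmetrized smoother R̄ := R + R* − R*AR, which satisfies I − R̄A = (I − R*A)(I − RA). Then: (i) R̄ is self-adjoint; (ii) for all v ∈ V, ⟨A R̄ A v, v⟩ = ‖v‖_A² − ‖(I − RA)v‖_A²; (iii) ‖I − R*A‖_A = ‖I − RA‖_A; (iv) if ‖I − RA‖_A < 1, then ⟨A R̄ A v, v⟩ ≥ (1 − ‖I − RA‖_A²)‖v‖_A² > 0 for all v ≠ 0, and in particular R̄ is SPD. -/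
open scoped RealInnerProductSpace

/-- The `A`-norm `‖v‖_A = ⟨Av, v⟩^{1/2}`. -/
noncomputable def Anorm {V : Type*} [NormedAddCommGroup V]
    [InnerProductSpace ℝ V] (A : V →ₗ[ℝ] V) (v : V) : ℝ :=
  Real.sqrt ⟪A v, v⟫

/-- The operator norm of `T : V → V` with respect to the `A`-norm. -/
noncomputable def AopNorm {V : Type*} [NormedAddCommGroup V]
    [InnerProductSpace ℝ V] (A T : V →ₗ[ℝ] V) : ℝ :=
  sInf {c : ℝ | 0 ≤ c ∧ ∀ v : V, Anorm A (T v) ≤ c * Anorm A v}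

/-- The symmetrized smoother `R̄ = R + R* − R*AR`. -/
noncomputable def symSmoother {V : Type*} [NormedAddCommGroup V]
    [InnerProductSpace ℝ V] [FiniteDimensional ℝ V]
    (A R : V →ₗ[ℝ] V) : V →ₗ[ℝ] V :=
  R + LinearMap.adjoint R - LinearMap.adjoint R ∘ₗ A ∘ₗ R

section Aux

variable {V : Type*} [NormedAddCommGroup V] [InnerProductSpace ℝ V]
variable {A : V →ₗ[ℝ] V}

lemma inner_A_nonneg (hA : IsSPD A) (v : V) : 0 ≤ ⟪A v, v⟫ := by
  rcases eq_or_ne v 0 with rfl | h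
  · simp
  · exact (hA.2 v h).le

lemma Anorm_sq (hA : IsSPD A) (v : V) : Anorm A v ^ 2 = ⟪A v, v⟫ :=
  Real.sq_sqrt (inner_A_nonneg hA v)

lemma Anorm_nonneg (A : V →ₗ[ℝ] V) (v : V) : 0 ≤ Anorm A v := Real.sqrt_nonneg _

lemma Anorm_eq_zero (hA : IsSPD A) {v : V} (h : Anorm A v = 0) : v = 0 := by
  by_contra hv
  have h1 := hA.2 v hv
  have : Anorm A v > 0 := Real.sqrt_pos.mpr h1
  linarith

/-- Cauchy–Schwarz for the `A`-inner product. -/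
lemma A_cauchy (hA : IsSPD A) (u v : V) : ⟪A u, v⟫ ≤ Anorm A u * Anorm A v := by
  have hquad : ∀ t : ℝ, 0 ≤ ⟪A v, v⟫ * (t * t) + (2 * ⟪A u, v⟫) * t + ⟪A u, u⟫ := by
    intro t
    have h0 : 0 ≤ ⟪A (u + t • v), u + t • v⟫ := inner_A_nonneg hA _
    have hsym : ⟪A v, u⟫ = ⟪A u, v⟫ := by
      rw [hA.1 v u, real_inner_comm]
    simp only [map_add, map_smul, inner_add_left, inner_add_right,
      real_inner_smul_left, real_inner_smul_right] at h0
    rw [hsym] at h0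
    nlinarith [h0]
  have hd := discrim_le_zero hquad
  have hdisc : (2 * ⟪A u, v⟫) ^ 2 - 4 * ⟪A v, v⟫ * ⟪A u, u⟫ ≤ 0 := by
    simpa [discrim] using hd
  have h1 : ⟪A u, v⟫ ^ 2 ≤ ⟪A u, u⟫ * ⟪A v, v⟫ := by nlinarith
  have h2 : Anorm A u * Anorm A v = Real.sqrt (⟪A u, u⟫ * ⟪A v, v⟫) := by
    rw [Anorm, Anorm, ← Real.sqrt_mul (inner_A_nonneg hA u)]
  rw [h2]
  calc ⟪A u, v⟫ ≤ |⟪A u, v⟫| := le_abs_self _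
    _ = Real.sqrt (⟪A u, v⟫ ^ 2) := (Real.sqrt_sq_eq_abs _).symm
    _ ≤ Real.sqrt (⟪A u, u⟫ * ⟪A v, v⟫) := Real.sqrt_le_sqrt h1

/-- Coercivity of an SPD operator in finite dimensions. -/
lemma A_coercive [FiniteDimensional ℝ V] (hA : IsSPD A) :
    ∃ m : ℝ, 0 < m ∧ ∀ v : V, m * ‖v‖ ^ 2 ≤ ⟪A v, v⟫ := by
  rcases subsingleton_or_nontrivial V with hV | hV
  · refine ⟨1, one_pos, fun v => ?_⟩
    have : v = 0 := Subsingleton.elim v 0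
    simp [this]
  · have hsph : (Metric.sphere (0 : V) 1).Nonempty :=
      NormedSpace.sphere_nonempty.mpr zero_le_one
    have hcomp : IsCompact (Metric.sphere (0 : V) 1) := isCompact_sphere 0 1
    have hcont : Continuous fun v : V => ⟪A v, v⟫ :=
      (A.continuous_of_finiteDimensional.inner continuous_id)
    obtain ⟨x₀, hx₀, hmin⟩ := hcomp.exists_isMinOn hsph hcont.continuousOn
    have hx₀norm : ‖x₀‖ = 1 := by simpa using hx₀
    have hx₀ne : x₀ ≠ 0 := by
      intro h; rw [h] at hx₀norm; simp at hx₀norm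
    refine ⟨⟪A x₀, x₀⟫, hA.2 x₀ hx₀ne, fun v => ?_⟩
    rcases eq_or_ne v 0 with rfl | hv
    · simp
    · have hvn : (0 : ℝ) < ‖v‖ := norm_pos_iff.mpr hv
      set u : V := ‖v‖⁻¹ • v with hu
      have hun : u ∈ Metric.sphere (0 : V) 1 := by
        simp [hu, norm_smul, abs_of_pos (inv_pos.mpr hvn), inv_mul_cancel₀ hvn.ne']
      have hle := hmin hun
      have hcalc : ⟪A u, u⟫ = ‖v‖⁻¹ * ‖v‖⁻¹ * ⟪A v, v⟫ := by
        rw [hu, map_smul, real_inner_smul_left, real_inner_smul_right]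
        ring
      have : ⟪A x₀, x₀⟫ ≤ ‖v‖⁻¹ * ‖v‖⁻¹ * ⟪A v, v⟫ := by
        simpa [hcalc] using hle
      have h2 : ⟪A x₀, x₀⟫ * ‖v‖ ^ 2 ≤ ⟪A v, v⟫ := by
        have h3 := mul_le_mul_of_nonneg_right this (le_of_lt (by positivity : (0:ℝ) < ‖v‖ ^ 2))
        calc ⟪A x₀, x₀⟫ * ‖v‖ ^ 2 ≤ ‖v‖⁻¹ * ‖v‖⁻¹ * ⟪A v, v⟫ * ‖v‖ ^ 2 := h3
          _ = (‖v‖⁻¹ * ‖v‖) * (‖v‖⁻¹ * ‖v‖) * ⟪A v, v⟫ := by ring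
          _ = ⟪A v, v⟫ := by rw [inv_mul_cancel₀ hvn.ne']; ring
      linarith

/-- The defining set for `AopNorm` is nonempty in finite dimensions. -/
lemma AopNorm_set_nonempty [FiniteDimensional ℝ V] (hA : IsSPD A) (T : V →ₗ[ℝ] V) :
    {c : ℝ | 0 ≤ c ∧ ∀ v : V, Anorm A (T v) ≤ c * Anorm A v}.Nonempty := by
  obtain ⟨m, hm, hcoer⟩ := A_coercive hA
  set A' := LinearMap.toContinuousLinearMap A with hA'
  set T' := LinearMap.toContinuousLinearMap T with hT'
  refine ⟨Real.sqrt (‖A'‖ * ‖T'‖ ^ 2 / m), Real.sqrt_nonneg _, fun v => ?_⟩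
  have hc2 : Real.sqrt (‖A'‖ * ‖T'‖ ^ 2 / m) ^ 2 = ‖A'‖ * ‖T'‖ ^ 2 / m := by
    apply Real.sq_sqrt; positivity
  have key : ⟪A (T v), T v⟫ ≤ (‖A'‖ * ‖T'‖ ^ 2 / m) * ⟪A v, v⟫ := by
    have h1 : ⟪A (T v), T v⟫ ≤ ‖A (T v)‖ * ‖T v‖ := real_inner_le_norm _ _
    have h2 : ‖A (T v)‖ ≤ ‖A'‖ * ‖T v‖ := A'.le_opNorm (T v)
    have h3 : ‖T v‖ ≤ ‖T'‖ * ‖v‖ := T'.le_opNorm v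
    have h4 : m * ‖v‖ ^ 2 ≤ ⟪A v, v⟫ := hcoer v
    have hTn : (0:ℝ) ≤ ‖T v‖ := norm_nonneg _
    have hvn : (0:ℝ) ≤ ‖v‖ := norm_nonneg _
    have hA'n : (0:ℝ) ≤ ‖A'‖ := norm_nonneg _
    have hT'n : (0:ℝ) ≤ ‖T'‖ := norm_nonneg _
    have h5 : ⟪A (T v), T v⟫ ≤ ‖A'‖ * ‖T'‖ ^ 2 * ‖v‖ ^ 2 := by
      calc ⟪A (T v), T v⟫ ≤ ‖A (T v)‖ * ‖T v‖ := h1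
        _ ≤ (‖A'‖ * ‖T v‖) * ‖T v‖ := mul_le_mul_of_nonneg_right h2 hTn
        _ = ‖A'‖ * (‖T v‖ * ‖T v‖) := by ring
        _ ≤ ‖A'‖ * ((‖T'‖ * ‖v‖) * (‖T'‖ * ‖v‖)) := by
            apply mul_le_mul_of_nonneg_left _ hA'n
            exact mul_le_mul h3 h3 hTn (by positivity)
        _ = ‖A'‖ * ‖T'‖ ^ 2 * ‖v‖ ^ 2 := by ring
    have h6 : ‖A'‖ * ‖T'‖ ^ 2 * ‖v‖ ^ 2 ≤ (‖A'‖ * ‖T'‖ ^ 2 / m) * ⟪A v, v⟫ := by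
      rw [div_mul_eq_mul_div, le_div_iff₀ hm]
      nlinarith [mul_le_mul_of_nonneg_left h4 (mul_nonneg hA'n (sq_nonneg ‖T'‖))]
    linarith
  have hL : Anorm A (T v) ^ 2 ≤ (Real.sqrt (‖A'‖ * ‖T'‖ ^ 2 / m) * Anorm A v) ^ 2 := by
    rw [Anorm_sq hA, mul_pow, hc2, Anorm_sq hA]
    exact key
  have h7 := Anorm_nonneg A (T v)
  have h8 : 0 ≤ Real.sqrt (‖A'‖ * ‖T'‖ ^ 2 / m) * Anorm A v :=
    mul_nonneg (Real.sqrt_nonneg _) (Anorm_nonneg A v)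
  nlinarith

lemma AopNorm_spec [FiniteDimensional ℝ V] (hA : IsSPD A) (T : V →ₗ[ℝ] V) :
    0 ≤ AopNorm A T ∧ ∀ v : V, Anorm A (T v) ≤ AopNorm A T * Anorm A v := by
  have hne := AopNorm_set_nonempty hA T
  have hbdd : BddBelow {c : ℝ | 0 ≤ c ∧ ∀ v : V, Anorm A (T v) ≤ c * Anorm A v} :=
    ⟨0, fun c hc => hc.1⟩
  constructor
  · exact le_csInf hne fun c hc => hc.1
  · intro v
    rcases eq_or_ne (Anorm A v) 0 with h | h
    · have hv : v = 0 := Anorm_eq_zero hA h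
      simp [hv, Anorm]
    · have hv : 0 < Anorm A v := lt_of_le_of_ne (Anorm_nonneg A v) (Ne.symm h)
      by_contra hcon
      push_neg at hcon
      have : sInf {c : ℝ | 0 ≤ c ∧ ∀ v : V, Anorm A (T v) ≤ c * Anorm A v} <
          Anorm A (T v) / Anorm A v := by
        rw [lt_div_iff₀ hv]; exact hcon
      obtain ⟨c, hc, hclt⟩ := exists_lt_of_csInf_lt hne this
      have := hc.2 v
      rw [lt_div_iff₀ hv] at hclt
      linarith

/-- Operators that are `A`-adjoint to each other have the same `A`-operator norm. -/
lemma AopNorm_adjoint [FiniteDimensional ℝ V] (hA : IsSPD A) (S T : V →ₗ[ℝ] V)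
    (h : ∀ u v : V, ⟪A (S u), v⟫ = ⟪A u, T v⟫) : AopNorm A S = AopNorm A T := by
  have key : ∀ (S T : V →ₗ[ℝ] V), (∀ u v : V, ⟪A (S u), v⟫ = ⟪A u, T v⟫) →
      ∀ c : ℝ, 0 ≤ c → (∀ v, Anorm A (S v) ≤ c * Anorm A v) →
      ∀ v, Anorm A (T v) ≤ c * Anorm A v := by
    intro S T h c hc hS v
    have h1 : Anorm A (T v) ^ 2 = ⟪A (S (T v)), v⟫ := by
      rw [Anorm_sq hA, h (T v) v]
    have h2 : ⟪A (S (T v)), v⟫ ≤ Anorm A (S (T v)) * Anorm A v := A_cauchy hA _ _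
    have h3 : Anorm A (S (T v)) ≤ c * Anorm A (T v) := hS (T v)
    have h4 : Anorm A (T v) ^ 2 ≤ c * Anorm A (T v) * Anorm A v := by
      calc Anorm A (T v) ^ 2 ≤ Anorm A (S (T v)) * Anorm A v := by rw [h1]; exact h2
        _ ≤ c * Anorm A (T v) * Anorm A v :=
            mul_le_mul_of_nonneg_right h3 (Anorm_nonneg A v)
    rcases eq_or_lt_of_le (Anorm_nonneg A (T v)) with h0 | h0
    · rw [← h0]; exact mul_nonneg hc (Anorm_nonneg A v)
    · nlinarith
  have hrev : ∀ u v : V, ⟪A (T u), v⟫ = ⟪A u, S v⟫ := by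
    intro u v
    calc ⟪A (T u), v⟫ = ⟪T u, A v⟫ := hA.1 _ _
      _ = ⟪A v, T u⟫ := real_inner_comm _ _
      _ = ⟪A (S v), u⟫ := (h v u).symm
      _ = ⟪S v, A u⟫ := hA.1 _ _
      _ = ⟪A u, S v⟫ := real_inner_comm _ _
  unfold AopNorm
  congr 1
  ext c
  constructor
  · rintro ⟨hc, hS⟩; exact ⟨hc, key S T h c hc hS⟩
  · rintro ⟨hc, hT⟩; exact ⟨hc, key T S hrev c hc hT⟩

end Aux

/-- Properties of the symmetrized smoother `R̄ = R + R* − R*AR`: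
`I − R̄A = (I − R*A)(I − RA)`, `R̄` is self-adjoint,
`⟨AR̄Av, v⟩ = ‖v‖_A² − ‖(I − RA)v‖_A²`, `‖I − R*A‖_A = ‖I − RA‖_A`, and if
`‖I − RA‖_A < 1` then `⟨AR̄Av, v⟩ ≥ (1 − ‖I − RA‖_A²)‖v‖_A²` and `R̄` is SPD. -/
theorem symmetrized_smoother_properties
    {V : Type*} [NormedAddCommGroup V] [InnerProductSpace ℝ V]
    [FiniteDimensional ℝ V]
    (A R : V →ₗ[ℝ] V) (hA : IsSPD A) :
    (LinearMap.id - symSmoother A R ∘ₗ A =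
      (LinearMap.id - LinearMap.adjoint R ∘ₗ A) ∘ₗ (LinearMap.id - R ∘ₗ A)) ∧
    -- (i) R̄ is self-adjoint
    (∀ u v : V, ⟪symSmoother A R u, v⟫ = ⟪u, symSmoother A R v⟫) ∧
    -- (ii)
    (∀ v : V, ⟪A (symSmoother A R (A v)), v⟫ =
      (Anorm A v) ^ 2 - (Anorm A (v - R (A v))) ^ 2) ∧
    -- (iii)
    (AopNorm A (LinearMap.id - LinearMap.adjoint R ∘ₗ A) =
      AopNorm A (LinearMap.id - R ∘ₗ A)) ∧
    -- (iv)
    (AopNorm A (LinearMap.id - R ∘ₗ A) < 1 →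
      (∀ v : V, (1 - (AopNorm A (LinearMap.id - R ∘ₗ A)) ^ 2) * (Anorm A v) ^ 2 ≤
        ⟪A (symSmoother A R (A v)), v⟫) ∧
      (∀ v : V, v ≠ 0 → 0 < ⟪A (symSmoother A R (A v)), v⟫) ∧
      IsSPD (symSmoother A R)) := by
  have hAsym := hA.1
  -- (0) the factorization identity
  have h0 : LinearMap.id - symSmoother A R ∘ₗ A =
      (LinearMap.id - LinearMap.adjoint R ∘ₗ A) ∘ₗ (LinearMap.id - R ∘ₗ A) := by
    ext v
    simp only [symSmoother, LinearMap.sub_apply, LinearMap.add_apply, LinearMap.comp_apply,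
      LinearMap.id_apply, map_sub, map_add]
    abel
  -- (i) self-adjointness
  have h1 : ∀ u v : V, ⟪symSmoother A R u, v⟫ = ⟪u, symSmoother A R v⟫ := by
    intro u v
    simp only [symSmoother, LinearMap.sub_apply, LinearMap.add_apply, LinearMap.comp_apply,
      inner_sub_left, inner_add_left, inner_sub_right, inner_add_right]
    have e1 : ⟪LinearMap.adjoint R u, v⟫ = ⟪u, R v⟫ := LinearMap.adjoint_inner_left R v u
    have e2 : ⟪R u, v⟫ = ⟪u, LinearMap.adjoint R v⟫ :=
      (LinearMap.adjoint_inner_right R u v).symm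
    have e3 : ⟪LinearMap.adjoint R (A (R u)), v⟫ = ⟪u, LinearMap.adjoint R (A (R v))⟫ := by
      calc ⟪LinearMap.adjoint R (A (R u)), v⟫ = ⟪A (R u), R v⟫ :=
            LinearMap.adjoint_inner_left R v (A (R u))
        _ = ⟪R u, A (R v)⟫ := hAsym _ _
        _ = ⟪u, LinearMap.adjoint R (A (R v))⟫ :=
            (LinearMap.adjoint_inner_right R u (A (R v))).symm
    rw [e1, e2, e3]
    ring
  -- (ii)
  have h2 : ∀ v : V, ⟪A (symSmoother A R (A v)), v⟫ =
      (Anorm A v) ^ 2 - (Anorm A (v - R (A v))) ^ 2 := by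
    intro v
    rw [Anorm_sq hA, Anorm_sq hA]
    simp only [symSmoother, LinearMap.sub_apply, LinearMap.add_apply, LinearMap.comp_apply,
      map_sub, map_add, inner_sub_left, inner_add_left, inner_sub_right]
    have e1 : ⟪A (LinearMap.adjoint R (A v)), v⟫ = ⟪A v, R (A v)⟫ := by
      calc ⟪A (LinearMap.adjoint R (A v)), v⟫
          = ⟪LinearMap.adjoint R (A v), A v⟫ := hAsym _ _
        _ = ⟪A v, R (A v)⟫ := LinearMap.adjoint_inner_left R (A v) (A v)
    have e2 : ⟪A (LinearMap.adjoint R (A (R (A v)))), v⟫ = ⟪A (R (A v)), R (A v)⟫ := by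
      calc ⟪A (LinearMap.adjoint R (A (R (A v)))), v⟫
          = ⟪LinearMap.adjoint R (A (R (A v))), A v⟫ := hAsym _ _
        _ = ⟪A (R (A v)), R (A v)⟫ := LinearMap.adjoint_inner_left R (A v) (A (R (A v)))
    have e3 : ⟪A v, R (A v)⟫ = ⟪A (R (A v)), v⟫ := by
      rw [hAsym (R (A v)) v, real_inner_comm]
    rw [e1, e2]
    linarith [e3]
  -- A-adjoint relation for (iii)
  have hadj : ∀ u v : V,
      ⟪A (((LinearMap.id : V →ₗ[ℝ] V) - LinearMap.adjoint R ∘ₗ A) u), v⟫ =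
      ⟪A u, ((LinearMap.id : V →ₗ[ℝ] V) - R ∘ₗ A) v⟫ := by
    intro u v
    simp only [LinearMap.sub_apply, LinearMap.comp_apply, LinearMap.id_apply, map_sub,
      inner_sub_left, inner_sub_right]
    congr 1
    calc ⟪A (LinearMap.adjoint R (A u)), v⟫
        = ⟪LinearMap.adjoint R (A u), A v⟫ := hAsym _ _
      _ = ⟪A u, R (A v)⟫ := LinearMap.adjoint_inner_left R (A v) (A u)
  have h3 : AopNorm A (LinearMap.id - LinearMap.adjoint R ∘ₗ A) =
      AopNorm A (LinearMap.id - R ∘ₗ A) := AopNorm_adjoint hA _ _ hadj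
  refine ⟨h0, h1, h2, h3, ?_⟩
  -- (iv)
  intro hlt
  obtain ⟨hc0, hcbound⟩ := AopNorm_spec hA ((LinearMap.id : V →ₗ[ℝ] V) - R ∘ₗ A)
  set c := AopNorm A ((LinearMap.id : V →ₗ[ℝ] V) - R ∘ₗ A) with hc
  have hbound : ∀ v : V, Anorm A (v - R (A v)) ≤ c * Anorm A v := by
    intro v
    have := hcbound v
    simpa [LinearMap.sub_apply, LinearMap.comp_apply] using this
  have hmain : ∀ v : V, (1 - c ^ 2) * (Anorm A v) ^ 2 ≤ ⟪A (symSmoother A R (A v)), v⟫ := by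
    intro v
    rw [h2 v]
    have hb := hbound v
    have h7 := Anorm_nonneg A (v - R (A v))
    have h8 := Anorm_nonneg A v
    nlinarith
  have hpos : ∀ v : V, v ≠ 0 → 0 < ⟪A (symSmoother A R (A v)), v⟫ := by
    intro v hv
    have h9 : 0 < (1 - c ^ 2) := by nlinarith
    have h10 : 0 < (Anorm A v) ^ 2 := by
      rw [Anorm_sq hA]; exact hA.2 v hv
    have := hmain v
    nlinarith
  refine ⟨hmain, hpos, h1, ?_⟩
  -- R̄ positive definite: use surjectivity of A
  intro w hw
  have hinj : Function.Injective A := by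
    intro a b hab
    rw [← sub_eq_zero] at hab ⊢
    by_contra hne
    have := hA.2 (a - b) hne
    rw [show A (a - b) = 0 by rw [map_sub, hab]] at this
    simp at this
  have hsurj : Function.Surjective A :=
    (LinearMap.injective_iff_surjective).mp hinj
  obtain ⟨v, rfl⟩ := hsurj w
  have hv : v ≠ 0 := by
    intro h; rw [h] at hw; simp at hw
  have := hpos v hv
  calc (0:ℝ) < ⟪A (symSmoother A R (A v)), v⟫ := this
    _ = ⟪symSmoother A R (A v), A v⟫ := hAsym _ _
end

section
/- Let V and W be finite-dimensional real inner product spaces, A an SPD operator on V, Π : W → V an injective linear map, A₀ := Π*AΠ, P₀ := A₀⁻¹Π*A, and R : V → V an arbitrary linear operator. Define the operator P̂ₘ : V → V through the identity I − P̂ₘA = (I − RA)(I − ΠA₀⁻¹Π*A)(I − R*A). Then for every v ∈ V, ⟨A P̂ₘ A v, v⟩ = ‖v‖_A² − ‖(I − ΠP₀)(I − R*A)v‖_A²; in particular ⟨A P̂ₘ A v, v⟩ ≤ ‖v‖_A² for all v ∈ V. -/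
open scoped RealInnerProductSpace

/-- Key identity for the exact-coarse-solver multiplicative preconditioner
`P̂ₘ` defined by `I − P̂ₘA = (I − RA)(I − ΠA₀⁻¹Π*A)(I − R*A)`:
`⟨AP̂ₘAv, v⟩ = ‖v‖_A² − ‖(I − ΠP₀)(I − R*A)v‖_A² ≤ ‖v‖_A²`. -/
theorem exact_multiplicative_identity
    {V : Type*} [NormedAddCommGroup V] [InnerProductSpace ℝ V]
    [FiniteDimensional ℝ V]
    {W : Type*} [NormedAddCommGroup W] [InnerProductSpace ℝ W]
    [FiniteDimensional ℝ W]
    (A R Phat : V →ₗ[ℝ] V) (Pi0 : W →ₗ[ℝ] V) (A0inv : W →ₗ[ℝ] W)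
    (hA : IsSPD A) (hPi0 : Function.Injective Pi0)
    (hA0inv₁ : A0inv ∘ₗ (LinearMap.adjoint Pi0 ∘ₗ A ∘ₗ Pi0) = LinearMap.id)
    (hA0inv₂ : (LinearMap.adjoint Pi0 ∘ₗ A ∘ₗ Pi0) ∘ₗ A0inv = LinearMap.id)
    (hPhat : LinearMap.id - Phat ∘ₗ A =
      (LinearMap.id - R ∘ₗ A) ∘ₗ
        (LinearMap.id - Pi0 ∘ₗ A0inv ∘ₗ LinearMap.adjoint Pi0 ∘ₗ A) ∘ₗ
        (LinearMap.id - LinearMap.adjoint R ∘ₗ A)) :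
    ∀ v : V,
      ⟪A (Phat (A v)), v⟫ =
        (Anorm A v) ^ 2 -
          (Anorm A (((LinearMap.id : V →ₗ[ℝ] V) -
              Pi0 ∘ₗ A0inv ∘ₗ LinearMap.adjoint Pi0 ∘ₗ A)
            (((LinearMap.id : V →ₗ[ℝ] V) - LinearMap.adjoint R ∘ₗ A) v))) ^ 2 ∧
      ⟪A (Phat (A v)), v⟫ ≤ (Anorm A v) ^ 2 := by
  obtain ⟨hAsym, hApos⟩ := hA
  have hAnn : ∀ v : V, 0 ≤ ⟪A v, v⟫ := by
    intro v
    rcases eq_or_ne v 0 with h | h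
    · simp [h]
    · exact (hApos v h).le
  have hAnorm : ∀ v : V, (Anorm A v) ^ 2 = ⟪A v, v⟫ := fun v =>
    Real.sq_sqrt (hAnn v)
  set Q : V →ₗ[ℝ] V := Pi0 ∘ₗ A0inv ∘ₗ LinearMap.adjoint Pi0 ∘ₗ A with hQdef
  set A0 : W →ₗ[ℝ] W := LinearMap.adjoint Pi0 ∘ₗ A ∘ₗ Pi0 with hA0def
  have hA0sym : ∀ a b : W, ⟪A0 a, b⟫ = ⟪a, A0 b⟫ := by
    intro a b
    simp only [hA0def, LinearMap.comp_apply]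
    rw [LinearMap.adjoint_inner_left, hAsym, ← LinearMap.adjoint_inner_right]
  have hA0invsym : ∀ a b : W, ⟪A0inv a, b⟫ = ⟪a, A0inv b⟫ := by
    intro a b
    have hb : A0 (A0inv b) = b := congrFun (congrArg DFunLike.coe hA0inv₂) b
    have ha : A0 (A0inv a) = a := congrFun (congrArg DFunLike.coe hA0inv₂) a
    calc ⟪A0inv a, b⟫ = ⟪A0inv a, A0 (A0inv b)⟫ := by rw [hb]
      _ = ⟪A0 (A0inv a), A0inv b⟫ := (hA0sym _ _).symm
      _ = ⟪a, A0inv b⟫ := by rw [ha]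
  have hQsym : ∀ x y : V, ⟪A (Q x), y⟫ = ⟪A x, Q y⟫ := by
    intro x y
    calc ⟪A (Q x), y⟫ = ⟪Q x, A y⟫ := hAsym _ _
      _ = ⟪A0inv (LinearMap.adjoint Pi0 (A x)), LinearMap.adjoint Pi0 (A y)⟫ := by
          simp only [hQdef, LinearMap.comp_apply]
          rw [← LinearMap.adjoint_inner_right]
      _ = ⟪LinearMap.adjoint Pi0 (A x), A0inv (LinearMap.adjoint Pi0 (A y))⟫ :=
          hA0invsym _ _
      _ = ⟪A x, Q y⟫ := by
          simp only [hQdef, LinearMap.comp_apply]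
          rw [LinearMap.adjoint_inner_left]
  have hQidem : ∀ x : V, Q (Q x) = Q x := by
    intro x
    have h : A0inv (A0 (A0inv (LinearMap.adjoint Pi0 (A x)))) =
        A0inv (LinearMap.adjoint Pi0 (A x)) :=
      congrFun (congrArg DFunLike.coe hA0inv₁) _
    simp only [hQdef, LinearMap.comp_apply] at h ⊢
    simp only [hA0def, LinearMap.comp_apply] at h
    rw [h]
  intro v
  set u : V := v - LinearMap.adjoint R (A v) with hu
  set e : V := u - Q u with he
  have hu' : ((LinearMap.id : V →ₗ[ℝ] V) - LinearMap.adjoint R ∘ₗ A) v = u := by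
    simp [hu, LinearMap.sub_apply]
  have he' : (((LinearMap.id : V →ₗ[ℝ] V) -
      Pi0 ∘ₗ A0inv ∘ₗ LinearMap.adjoint Pi0 ∘ₗ A)
      (((LinearMap.id : V →ₗ[ℝ] V) - LinearMap.adjoint R ∘ₗ A) v)) = e := by
    rw [hu']
    simp [he, hQdef, LinearMap.sub_apply]
  have hPhatv : Phat (A v) = v - (e - R (A e)) := by
    have h := congrFun (congrArg DFunLike.coe hPhat) v
    simp only [LinearMap.sub_apply, LinearMap.comp_apply, LinearMap.id_apply] at h
    have h2 : v - Phat (A v) = e - R (A e) := by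
      rw [h]
    rw [← h2]; abel
  have key : ⟪A (e - R (A e)), v⟫ = ⟪A e, e⟫ := by
    have h1 : ⟪A (e - R (A e)), v⟫ = ⟪A e, u⟫ := by
      rw [map_sub, inner_sub_left]
      have : ⟪A (R (A e)), v⟫ = ⟪A e, LinearMap.adjoint R (A v)⟫ := by
        rw [hAsym, LinearMap.adjoint_inner_right]
      rw [this, hu, inner_sub_right]
    have h2 : ⟪A e, e⟫ = ⟪A e, u⟫ := by
      have hQQ : ⟪A (Q u), Q u⟫ = ⟪A (Q u), u⟫ := by
        have := hQsym (Q u) u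
        rw [hQidem u] at this
        rw [this, ← hQsym]
      have hAuQu : ⟪A u, Q u⟫ = ⟪A (Q u), u⟫ := (hQsym u u).symm
      simp only [he, map_sub, inner_sub_left, inner_sub_right]
      rw [hQQ, hAuQu]
      ring
    rw [h1, h2]
  have main : ⟪A (Phat (A v)), v⟫ = ⟪A v, v⟫ - ⟪A e, e⟫ := by
    rw [hPhatv, map_sub, inner_sub_left, key]
  constructor
  · rw [main, hAnorm, he', hAnorm]
  · rw [main, hAnorm]
    have := hAnn e
    linarith
end

section
/- Let V and W be finite-dimensional real inner product spaces, A an SPD operator on V, Π : W → V an injective linear map, A₀ := Π*AΠ, and R : V → V a linear operator with ‖I − RA‖_A < 1. Let R₀ be an SPD operator on W for which there exist constants C₁, C₂ > 0 with C₁⟨A₀w, w⟩ ≤ ⟨A₀R₀A₀w, w⟩ ≤ C₂⟨A₀w, w⟩ for all w ∈ W. Define the multiplicative preconditioner Pₘ through I − PₘA = (I − RA)(I − ΠR₀Π*A)(I − R*A), and the exact-coarse-solver variant P̂ₘ through I − P̂ₘA = (I − RA)(I − ΠA₀⁻¹Π*A)(I − R*A). Then for all v ∈ V: min{1, C₁}·⟨A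 P̂ₘ A v, v⟩ ≤ ⟨A Pₘ A v, v⟩ ≤ max{1, C₂}·⟨A P̂ₘ A v, v⟩. -/
open scoped RealInnerProductSpace

section Aux

lemma quad_discrim (a b c : ℝ) (ha : 0 ≤ a) (hc : 0 ≤ c)
    (h : ∀ t : ℝ, 0 ≤ c + 2 * t * b + t ^ 2 * a) : b ^ 2 ≤ a * c := by
  rcases eq_or_lt_of_le ha with h0 | hpos
  · -- a = 0
    have hb : b = 0 := by
      by_contra hbne
      have h1 := h (-(c + 1) / (2 * b))
      rw [← h0] at h1
      have e : 2 * (-(c + 1) / (2 * b)) * b = -(c + 1) := by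
        field_simp
      rw [e] at h1
      linarith
    rw [hb]
    nlinarith
  · have h1 := h (-b / a)
    have e : c + 2 * (-b / a) * b + (-b / a) ^ 2 * a = (a * c - b ^ 2) / a := by
      field_simp
      ring
    rw [e] at h1
    have h2 := mul_nonneg hpos.le h1
    rw [mul_div_cancel₀ _ (ne_of_gt hpos)] at h2
    linarith

variable {V : Type*} [NormedAddCommGroup V] [InnerProductSpace ℝ V]

lemma IsSPD.inner_nonneg {A : V →ₗ[ℝ] V} (hA : IsSPD A) (v : V) :
    0 ≤ ⟪A v, v⟫ := by
  rcases eq_or_ne v 0 with rfl | h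
  · simp
  · exact (hA.2 v h).le

lemma IsSPD.cauchy_schwarz {A : V →ₗ[ℝ] V} (hA : IsSPD A) (x y : V) :
    ⟪A x, y⟫ ≤ Real.sqrt ⟪A x, x⟫ * Real.sqrt ⟪A y, y⟫ := by
  have hkey : ∀ t : ℝ, 0 ≤ ⟪A x, x⟫ + 2 * t * ⟪A x, y⟫ + t ^ 2 * ⟪A y, y⟫ := by
    intro t
    have hyx : ⟪A y, x⟫ = ⟪A x, y⟫ := by
      rw [hA.1 y x]; exact (real_inner_comm y (A x)).symm
    have e : ⟪A (x + t • y), x + t • y⟫ =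
        ⟪A x, x⟫ + 2 * t * ⟪A x, y⟫ + t ^ 2 * ⟪A y, y⟫ := by
      simp only [map_add, map_smul, inner_add_left, inner_add_right,
        real_inner_smul_left, real_inner_smul_right, hyx]
      ring
    rw [← e]
    exact hA.inner_nonneg _
  have hb2 : ⟪A x, y⟫ ^ 2 ≤ ⟪A y, y⟫ * ⟪A x, x⟫ :=
    quad_discrim _ _ _ (hA.inner_nonneg y) (hA.inner_nonneg x) hkey
  calc ⟪A x, y⟫ ≤ |⟪A x, y⟫| := le_abs_self _
    _ = Real.sqrt (⟪A x, y⟫ ^ 2) := (Real.sqrt_sq_eq_abs _).symm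
    _ ≤ Real.sqrt (⟪A y, y⟫ * ⟪A x, x⟫) := Real.sqrt_le_sqrt hb2
    _ = Real.sqrt ⟪A x, x⟫ * Real.sqrt ⟪A y, y⟫ := by
        rw [Real.sqrt_mul (hA.inner_nonneg y), mul_comm]

end Aux

section Aux2

variable {V : Type*} [NormedAddCommGroup V] [InnerProductSpace ℝ V]
  [FiniteDimensional ℝ V]

lemma spd_lower {A : V →ₗ[ℝ] V} (hA : IsSPD A) :
    ∃ α > 0, ∀ v : V, α * ‖v‖ ^ 2 ≤ ⟪A v, v⟫ := by
  rcases subsingleton_or_nontrivial V with h | h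
  · exact ⟨1, one_pos, fun v => by
      have : v = 0 := Subsingleton.elim v 0
      simp [this]⟩
  · have hcs : IsCompact (Metric.sphere (0 : V) 1) := isCompact_sphere 0 1
    have hne : (Metric.sphere (0 : V) 1).Nonempty :=
      NormedSpace.sphere_nonempty.mpr zero_le_one
    have hcont : Continuous fun v : V => ⟪A v, v⟫ :=
      continuous_inner.comp
        ((A.continuous_of_finiteDimensional).prodMk continuous_id)
    obtain ⟨x₀, hx₀, hmin⟩ := hcs.exists_isMinOn hne hcont.continuousOn
    have hx₀norm : ‖x₀‖ = 1 := by simpa using hx₀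
    have hx₀ne : x₀ ≠ 0 := by
      intro h0; rw [h0, norm_zero] at hx₀norm; norm_num at hx₀norm
    refine ⟨⟪A x₀, x₀⟫, hA.2 x₀ hx₀ne, fun v => ?_⟩
    rcases eq_or_ne v 0 with rfl | hv
    · simp
    · have hvn : (0:ℝ) < ‖v‖ := norm_pos_iff.mpr hv
      have h1 : (‖v‖⁻¹ • v) ∈ Metric.sphere (0:V) 1 := by
        simp [norm_smul, abs_of_pos (inv_pos.mpr hvn),
          inv_mul_cancel₀ hvn.ne']
      have h2 : ⟪A x₀, x₀⟫ ≤ ⟪A (‖v‖⁻¹ • v), ‖v‖⁻¹ • v⟫ := hmin h1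
      have h3 : ⟪A (‖v‖⁻¹ • v), ‖v‖⁻¹ • v⟫ = ‖v‖⁻¹ * (‖v‖⁻¹ * ⟪A v, v⟫) := by
        rw [map_smul, real_inner_smul_left, real_inner_smul_right]
      rw [h3] at h2
      have h4 : ⟪A x₀, x₀⟫ * ‖v‖ ^ 2 ≤ ‖v‖⁻¹ * (‖v‖⁻¹ * ⟪A v, v⟫) * ‖v‖ ^ 2 :=
        mul_le_mul_of_nonneg_right h2 (by positivity)
      have h5 : ‖v‖⁻¹ * (‖v‖⁻¹ * ⟪A v, v⟫) * ‖v‖ ^ 2 = ⟪A v, v⟫ := by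
        rw [pow_two]
        field_simp
      linarith [h5 ▸ h4]

lemma spd_upper {A : V →ₗ[ℝ] V} (hA : IsSPD A) :
    ∃ β ≥ 0, ∀ v : V, ⟪A v, v⟫ ≤ β * ‖v‖ ^ 2 := by
  refine ⟨‖LinearMap.toContinuousLinearMap A‖, norm_nonneg _, fun v => ?_⟩
  calc ⟪A v, v⟫ ≤ ‖A v‖ * ‖v‖ := real_inner_le_norm _ _
    _ = ‖(LinearMap.toContinuousLinearMap A) v‖ * ‖v‖ := by
        simp
    _ ≤ ‖LinearMap.toContinuousLinearMap A‖ * ‖v‖ * ‖v‖ :=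
        mul_le_mul_of_nonneg_right
          ((LinearMap.toContinuousLinearMap A).le_opNorm v) (norm_nonneg v)
    _ = ‖LinearMap.toContinuousLinearMap A‖ * ‖v‖ ^ 2 := by ring

lemma aop_set_nonempty {A : V →ₗ[ℝ] V} (T : V →ₗ[ℝ] V) (hA : IsSPD A) :
    ∃ c : ℝ, 0 ≤ c ∧ ∀ v : V, Anorm A (T v) ≤ c * Anorm A v := by
  obtain ⟨α, hα, hlow⟩ := spd_lower hA
  obtain ⟨β, hβ, hup⟩ := spd_upper hA
  set M := ‖LinearMap.toContinuousLinearMap T‖ with hM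
  refine ⟨Real.sqrt β * M / Real.sqrt α, by positivity, fun v => ?_⟩
  have h1 : Anorm A (T v) ≤ Real.sqrt β * ‖T v‖ := by
    rw [Anorm, ← Real.sqrt_sq (norm_nonneg (T v)), ← Real.sqrt_mul hβ]
    exact Real.sqrt_le_sqrt (hup (T v))
  have h2 : ‖T v‖ ≤ M * ‖v‖ := by
    have := (LinearMap.toContinuousLinearMap T).le_opNorm v
    simpa using this
  have h3 : Real.sqrt α * ‖v‖ ≤ Anorm A v := by
    rw [Anorm, ← Real.sqrt_sq (norm_nonneg v), ← Real.sqrt_mul hα.le]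
    exact Real.sqrt_le_sqrt (hlow v)
  have hsa : (0:ℝ) < Real.sqrt α := Real.sqrt_pos.mpr hα
  calc Anorm A (T v) ≤ Real.sqrt β * (M * ‖v‖) := by nlinarith [Real.sqrt_nonneg β]
    _ = (Real.sqrt β * M / Real.sqrt α) * (Real.sqrt α * ‖v‖) := by
        field_simp
    _ ≤ (Real.sqrt β * M / Real.sqrt α) * Anorm A v := by
        apply mul_le_mul_of_nonneg_left h3
        positivity

lemma contraction_of_aop_lt_one {A T : V →ₗ[ℝ] V} (hA : IsSPD A)
    (h : AopNorm A T < 1) : ∀ v : V, ⟪A (T v), T v⟫ ≤ ⟪A v, v⟫ := by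
  have hbdd : BddBelow {c : ℝ | 0 ≤ c ∧ ∀ v : V, Anorm A (T v) ≤ c * Anorm A v} :=
    ⟨0, fun c hc => hc.1⟩
  have hne : {c : ℝ | 0 ≤ c ∧ ∀ v : V, Anorm A (T v) ≤ c * Anorm A v}.Nonempty :=
    aop_set_nonempty T hA
  obtain ⟨c, ⟨hc0, hcb⟩, hc1⟩ := (csInf_lt_iff hbdd hne).mp h
  intro v
  have h1 : Anorm A (T v) ≤ Anorm A v := by
    calc Anorm A (T v) ≤ c * Anorm A v := hcb v
      _ ≤ 1 * Anorm A v := mul_le_mul_of_nonneg_right hc1.le (Real.sqrt_nonneg _)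
      _ = Anorm A v := one_mul _
  have h2 := hA.inner_nonneg (T v)
  have h3 := hA.inner_nonneg v
  have h4 := mul_self_le_mul_self (Real.sqrt_nonneg (⟪A (T v), T v⟫ : ℝ)) h1
  simp only [Anorm] at h4
  nlinarith [Real.sq_sqrt h2, Real.sq_sqrt h3, h4]

end Aux2

/-- Comparison of the multiplicative preconditioner `Pₘ` (with inexact coarse
solver `R₀` spectrally equivalent to `A₀⁻¹`) with the exact-coarse-solver
variant `P̂ₘ`: `min{1, C₁}⟨AP̂ₘAv, v⟩ ≤ ⟨APₘAv, v⟩ ≤ max{1, C₂}⟨AP̂ₘAv, v⟩`. -/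
theorem multiplicative_exact_vs_inexact
    {V : Type*} [NormedAddCommGroup V] [InnerProductSpace ℝ V]
    [FiniteDimensional ℝ V]
    {W : Type*} [NormedAddCommGroup W] [InnerProductSpace ℝ W]
    [FiniteDimensional ℝ W]
    (A R Pm Phat : V →ₗ[ℝ] V) (R0 A0inv : W →ₗ[ℝ] W) (Pi0 : W →ₗ[ℝ] V)
    (hA : IsSPD A) (hR0 : IsSPD R0) (hPi0 : Function.Injective Pi0)
    (hR : AopNorm A (LinearMap.id - R ∘ₗ A) < 1)
    (hA0inv₁ : A0inv ∘ₗ (LinearMap.adjoint Pi0 ∘ₗ A ∘ₗ Pi0) = LinearMap.id)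
    (hA0inv₂ : (LinearMap.adjoint Pi0 ∘ₗ A ∘ₗ Pi0) ∘ₗ A0inv = LinearMap.id)
    (C₁ C₂ : ℝ) (hC₁ : 0 < C₁) (hC₂ : 0 < C₂)
    (hspec : ∀ w : W,
      C₁ * ⟪(LinearMap.adjoint Pi0 ∘ₗ A ∘ₗ Pi0) w, w⟫ ≤
        ⟪(LinearMap.adjoint Pi0 ∘ₗ A ∘ₗ Pi0)
          (R0 ((LinearMap.adjoint Pi0 ∘ₗ A ∘ₗ Pi0) w)), w⟫ ∧
      ⟪(LinearMap.adjoint Pi0 ∘ₗ A ∘ₗ Pi0)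
          (R0 ((LinearMap.adjoint Pi0 ∘ₗ A ∘ₗ Pi0) w)), w⟫ ≤
        C₂ * ⟪(LinearMap.adjoint Pi0 ∘ₗ A ∘ₗ Pi0) w, w⟫)
    (hPm : LinearMap.id - Pm ∘ₗ A =
      (LinearMap.id - R ∘ₗ A) ∘ₗ
        (LinearMap.id - Pi0 ∘ₗ R0 ∘ₗ LinearMap.adjoint Pi0 ∘ₗ A) ∘ₗ
        (LinearMap.id - LinearMap.adjoint R ∘ₗ A))
    (hPhat : LinearMap.id - Phat ∘ₗ A =
      (LinearMap.id - R ∘ₗ A) ∘ₗ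
        (LinearMap.id - Pi0 ∘ₗ A0inv ∘ₗ LinearMap.adjoint Pi0 ∘ₗ A) ∘ₗ
        (LinearMap.id - LinearMap.adjoint R ∘ₗ A)) :
    ∀ v : V,
      min 1 C₁ * ⟪A (Phat (A v)), v⟫ ≤ ⟪A (Pm (A v)), v⟫ ∧
      ⟪A (Pm (A v)), v⟫ ≤ max 1 C₂ * ⟪A (Phat (A v)), v⟫ := by

  intro v
  set u : V := v - LinearMap.adjoint R (A v) with hu
  set g : W := LinearMap.adjoint Pi0 (A u) with hg
  have hE := contraction_of_aop_lt_one hA hR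
  have hAuu : ⟪A u, u⟫ ≤ ⟪A v, v⟫ := by
    have hsplit : A u = A v - A (LinearMap.adjoint R (A v)) := by
      rw [hu, map_sub]
    have e1 : ⟪A u, u⟫ = ⟪A v, u - R (A u)⟫ := by
      conv_lhs => rw [hsplit, inner_sub_left,
        hA.1 (LinearMap.adjoint R (A v)) u, LinearMap.adjoint_inner_left]
      exact (inner_sub_right _ _ _).symm
    have hZX : ⟪A (u - R (A u)), u - R (A u)⟫ ≤ ⟪A u, u⟫ := by
      simpa using hE u
    have hcs := hA.cauchy_schwarz v (u - R (A u))
    have hs1 : Real.sqrt ⟪A (u - R (A u)), u - R (A u)⟫ ≤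
        Real.sqrt ⟪A u, u⟫ := Real.sqrt_le_sqrt hZX
    have hXu : (0:ℝ) ≤ ⟪A u, u⟫ := hA.inner_nonneg u
    have hYv : (0:ℝ) ≤ ⟪A v, v⟫ := hA.inner_nonneg v
    have hmain : ⟪A u, u⟫ ≤ Real.sqrt ⟪A v, v⟫ * Real.sqrt ⟪A u, u⟫ := by
      calc ⟪A u, u⟫ = ⟪A v, u - R (A u)⟫ := e1
        _ ≤ Real.sqrt ⟪A v, v⟫ * Real.sqrt ⟪A (u - R (A u)), u - R (A u)⟫ := hcs
        _ ≤ Real.sqrt ⟪A v, v⟫ * Real.sqrt ⟪A u, u⟫ :=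
            mul_le_mul_of_nonneg_left hs1 (Real.sqrt_nonneg _)
    have hXeq : Real.sqrt ⟪A u, u⟫ * Real.sqrt ⟪A u, u⟫ = ⟪A u, u⟫ :=
      Real.mul_self_sqrt hXu
    rcases eq_or_lt_of_le (Real.sqrt_nonneg (⟪A u, u⟫ : ℝ)) with h0 | h0
    · nlinarith [hXeq]
    · have h6 : Real.sqrt ⟪A u, u⟫ * Real.sqrt ⟪A u, u⟫ ≤
          Real.sqrt ⟪A v, v⟫ * Real.sqrt ⟪A u, u⟫ := by rw [hXeq]; exact hmain
      have h7 := le_of_mul_le_mul_right h6 h0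
      calc ⟪A u, u⟫ = Real.sqrt ⟪A u, u⟫ * Real.sqrt ⟪A u, u⟫ := hXeq.symm
        _ ≤ Real.sqrt ⟪A v, v⟫ * Real.sqrt ⟪A v, v⟫ :=
            mul_self_le_mul_self (Real.sqrt_nonneg _) h7
        _ = ⟪A v, v⟫ := Real.mul_self_sqrt hYv
  -- key identity for both preconditioners
  have key : ∀ (S : W →ₗ[ℝ] W) (P : V →ₗ[ℝ] V),
      (LinearMap.id - P ∘ₗ A =
        (LinearMap.id - R ∘ₗ A) ∘ₗ
          (LinearMap.id - Pi0 ∘ₗ S ∘ₗ LinearMap.adjoint Pi0 ∘ₗ A) ∘ₗ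
          (LinearMap.id - LinearMap.adjoint R ∘ₗ A)) →
      ⟪A (P (A v)), v⟫ = ⟪A v, v⟫ - ⟪A u, u⟫ + ⟪S g, g⟫ := by
    intro S P hP
    have h1 := LinearMap.congr_fun hP v
    simp only [LinearMap.sub_apply, LinearMap.comp_apply, LinearMap.id_apply] at h1
    rw [← hu, ← hg] at h1
    set z : V := u - Pi0 (S g) with hz
    have h2 : P (A v) = v - (z - R (A z)) := by
      have h3 := congrArg (fun x => v - x) h1
      simpa using h3
    have hru : LinearMap.adjoint R (A v) = v - u := by rw [hu]; abel
    have e4 : ⟪A (R (A z)), v⟫ = ⟪A z, v⟫ - ⟪A z, u⟫ := by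
      calc ⟪A (R (A z)), v⟫ = ⟪R (A z), A v⟫ := hA.1 _ _
        _ = ⟪A z, LinearMap.adjoint R (A v)⟫ :=
            (LinearMap.adjoint_inner_right R (A z) (A v)).symm
        _ = ⟪A z, v - u⟫ := by rw [hru]
        _ = ⟪A z, v⟫ - ⟪A z, u⟫ := inner_sub_right _ _ _
    have e5 : ⟪A (Pi0 (S g)), u⟫ = ⟪S g, g⟫ := by
      calc ⟪A (Pi0 (S g)), u⟫ = ⟪Pi0 (S g), A u⟫ := hA.1 _ _
        _ = ⟪S g, LinearMap.adjoint Pi0 (A u)⟫ :=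
            (LinearMap.adjoint_inner_right Pi0 (S g) (A u)).symm
        _ = ⟪S g, g⟫ := by rw [← hg]
    have e6 : ⟪A z, u⟫ = ⟪A u, u⟫ - ⟪S g, g⟫ := by
      have hAz : A z = A u - A (Pi0 (S g)) := by rw [hz, map_sub]
      rw [hAz, inner_sub_left, e5]
    rw [h2, map_sub, inner_sub_left, map_sub, inner_sub_left, e4, e6]
    ring
  have hPmv := key R0 Pm hPm
  have hPhatv := key A0inv Phat hPhat
  -- spectral equivalence transported to g
  have hgw : LinearMap.adjoint Pi0 (A (Pi0 (A0inv g))) = g := by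
    have h := LinearMap.congr_fun hA0inv₂ g
    simpa [LinearMap.comp_apply] using h
  have hA0sym : ∀ x y : W, ⟪LinearMap.adjoint Pi0 (A (Pi0 x)), y⟫ =
      ⟪x, LinearMap.adjoint Pi0 (A (Pi0 y))⟫ := by
    intro x y
    rw [LinearMap.adjoint_inner_left, hA.1, ← LinearMap.adjoint_inner_right]
  obtain ⟨hs1, hs2⟩ := hspec (A0inv g)
  simp only [LinearMap.comp_apply] at hs1 hs2
  rw [hgw] at hs1 hs2
  have etw : ⟪LinearMap.adjoint Pi0 (A (Pi0 (R0 g))), A0inv g⟫ = ⟪R0 g, g⟫ := by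
    rw [hA0sym (R0 g) (A0inv g), hgw]
  have egw : ⟪g, A0inv g⟫ = ⟪A0inv g, g⟫ := (real_inner_comm g (A0inv g)).symm
  rw [etw, egw] at hs1 hs2
  have hs0 : (0:ℝ) ≤ ⟪A0inv g, g⟫ := by
    have e : ⟪A (Pi0 (A0inv g)), Pi0 (A0inv g)⟫ = ⟪A0inv g, g⟫ := by
      calc ⟪A (Pi0 (A0inv g)), Pi0 (A0inv g)⟫
          = ⟪Pi0 (A0inv g), A (Pi0 (A0inv g))⟫ := hA.1 _ _
        _ = ⟪A0inv g, LinearMap.adjoint Pi0 (A (Pi0 (A0inv g)))⟫ :=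
            (LinearMap.adjoint_inner_right Pi0 (A0inv g) _).symm
        _ = ⟪A0inv g, g⟫ := by rw [hgw]
    rw [← e]
    exact hA.inner_nonneg _
  -- conclusion
  rw [hPmv, hPhatv]
  have hD0 : (0:ℝ) ≤ ⟪A v, v⟫ - ⟪A u, u⟫ := by linarith
  constructor
  · have m1 : min 1 C₁ * (⟪A v, v⟫ - ⟪A u, u⟫) ≤ ⟪A v, v⟫ - ⟪A u, u⟫ :=
      mul_le_of_le_one_left hD0 (min_le_left 1 C₁)
    have m2 : min 1 C₁ * ⟪A0inv g, g⟫ ≤ C₁ * ⟪A0inv g, g⟫ :=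
      mul_le_mul_of_nonneg_right (min_le_right 1 C₁) hs0
    nlinarith [hs1, m1, m2]
  · have m1 : ⟪A v, v⟫ - ⟪A u, u⟫ ≤ max 1 C₂ * (⟪A v, v⟫ - ⟪A u, u⟫) :=
      le_mul_of_one_le_left hD0 (le_max_left 1 C₂)
    have m2 : C₂ * ⟪A0inv g, g⟫ ≤ max 1 C₂ * ⟪A0inv g, g⟫ :=
      mul_le_mul_of_nonneg_right (le_max_right 1 C₂) hs0
    nlinarith [hs2, m1, m2]
end

section
/- Let V and W be finite-dimensional real inner product spaces. Let A be SPD on V, R̄ SPD on V, R₀ SPD on W, and Π : W → V an injective linear map. Assume the stable decomposition property with constant c₀ > 0 (every v ∈ V can be written v = v₁ + Πw with ⟨R̄⁻¹v₁, v₁⟩ + ⟨R₀⁻¹w, w⟩ ≤ c₀²⟨Av, v⟩) and the boundedness properties with constants c₁, c₂ > 0 (⟨AΠw, Πw⟩ ≤ c₁²⟨R₀⁻¹w, w⟩ for all w ∈ W, and ⟨Av, v⟩ ≤ c₂²⟨R̄⁻¹v, v⟩ for all v ∈ V). Let B be a linear operator on V satisfying, for constants κ, C > 0 and all u, v ∈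 V: ⟨Bv, v⟩ ≥ κ⟨Av, v⟩ and ⟨Bu, v⟩ ≤ C⟨Au, u⟩^{1/2}⟨Av, v⟩^{1/2}. Then the additive preconditioner P_a := R̄ + ΠR₀Π* is SPD, and for all v ∈ V: ⟨Bv, v⟩ ≥ κ·c₀⁻²·⟨P_a⁻¹v, v⟩ and ⟨P_a⁻¹(P_aBv), P_aBv⟩^{1/2} ≤ C·(c₁² + c₂²)·⟨P_a⁻¹v, v⟩^{1/2}; that is, P_a is an FOV-equivalent preconditioner for B with constants depending only on κ, C, c₀, c₁, c₂. -/
open scoped RealInnerProductSpace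

section Helpers

variable {V : Type*} [NormedAddCommGroup V] [InnerProductSpace ℝ V]

lemma IsSPD.nonneg {T : V →ₗ[ℝ] V} (hT : IsSPD T) (v : V) : 0 ≤ ⟪T v, v⟫ := by
  by_cases h : v = 0
  · simp [h]
  · exact (hT.2 v h).le

/-- Cauchy–Schwarz for a symmetric positive semidefinite operator. -/
lemma cs_op {T : V →ₗ[ℝ] V} (hsymm : ∀ u v : V, ⟪T u, v⟫ = ⟪u, T v⟫)
    (hpos : ∀ v : V, 0 ≤ ⟪T v, v⟫) (x y : V) :
    ⟪T x, y⟫ ≤ Real.sqrt ⟪T x, x⟫ * Real.sqrt ⟪T y, y⟫ := by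
  have hq : ∀ t : ℝ, 0 ≤ ⟪T y, y⟫ * (t * t) + (2 * ⟪T x, y⟫) * t + ⟪T x, x⟫ := by
    intro t
    have h0 : 0 ≤ ⟪T (x + t • y), x + t • y⟫ := hpos _
    have hyx : ⟪T y, x⟫ = ⟪T x, y⟫ := by
      rw [hsymm y x, real_inner_comm]
    simp only [map_add, map_smul, inner_add_left, inner_add_right,
      inner_smul_left, inner_smul_right, RCLike.ofReal_real_eq_id, id, hyx,
      conj_trivial] at h0
    ring_nf at h0 ⊢
    linarith
  have hd := discrim_le_zero hq
  rw [discrim] at hd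
  have key : ⟪T x, y⟫ ^ 2 ≤ ⟪T x, x⟫ * ⟪T y, y⟫ := by nlinarith
  calc ⟪T x, y⟫ ≤ |⟪T x, y⟫| := le_abs_self _
    _ = Real.sqrt (⟪T x, y⟫ ^ 2) := (Real.sqrt_sq_eq_abs _).symm
    _ ≤ Real.sqrt (⟪T x, x⟫ * ⟪T y, y⟫) := Real.sqrt_le_sqrt key
    _ = Real.sqrt ⟪T x, x⟫ * Real.sqrt ⟪T y, y⟫ := Real.sqrt_mul (hpos x) _

lemma IsSPD.inv {T Tinv : V →ₗ[ℝ] V} (hT : IsSPD T)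
    (h1 : Tinv ∘ₗ T = LinearMap.id) (h2 : T ∘ₗ Tinv = LinearMap.id) :
    IsSPD Tinv := by
  have h2' : ∀ v : V, T (Tinv v) = v := fun v => LinearMap.ext_iff.mp h2 v
  constructor
  · intro u v
    calc ⟪Tinv u, v⟫ = ⟪Tinv u, T (Tinv v)⟫ := by rw [h2']
      _ = ⟪T (Tinv u), Tinv v⟫ := (hT.1 _ _).symm
      _ = ⟪u, Tinv v⟫ := by rw [h2']
  · intro v hv
    have hTv : Tinv v ≠ 0 := by
      intro h
      apply hv
      have := h2' v
      rw [h, map_zero] at this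
      exact this.symm
    calc (0:ℝ) < ⟪T (Tinv v), Tinv v⟫ := hT.2 (Tinv v) hTv
      _ = ⟪v, Tinv v⟫ := by rw [h2']
      _ = ⟪Tinv v, v⟫ := real_inner_comm _ _

lemma IsSPD.exists_inv [FiniteDimensional ℝ V] {T : V →ₗ[ℝ] V} (hT : IsSPD T) :
    ∃ Tinv : V →ₗ[ℝ] V, Tinv ∘ₗ T = LinearMap.id ∧ T ∘ₗ Tinv = LinearMap.id := by
  have hinj : Function.Injective T := by
    rw [← LinearMap.ker_eq_bot, LinearMap.ker_eq_bot']
    intro v hv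
    by_contra h
    have := hT.2 v h
    rw [hv] at this
    simp at this
  have hbij : Function.Bijective T :=
    ⟨hinj, (LinearMap.injective_iff_surjective).mp hinj⟩
  let e := LinearEquiv.ofBijective T hbij
  refine ⟨e.symm.toLinearMap, ?_, ?_⟩
  · ext v; exact e.symm_apply_apply v
  · ext v; exact e.apply_symm_apply v

/-- squaring trick : if `p ≤ √p * K` with `p, K ≥ 0` then `p ≤ K ^ 2`. -/
lemma sq_trick {p K : ℝ} (hp : 0 ≤ p) (hK : 0 ≤ K)
    (h : p ≤ Real.sqrt p * K) : p ≤ K ^ 2 := by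
  rcases eq_or_lt_of_le hp with h0 | h0
  · nlinarith
  · have hsp : 0 < Real.sqrt p := Real.sqrt_pos.mpr h0
    have hpp : p = Real.sqrt p * Real.sqrt p := (Real.mul_self_sqrt hp).symm
    have hle : Real.sqrt p ≤ K := by nlinarith
    nlinarith

/-- two-term Cauchy inequality for square roots. -/
lemma sqrt_two_term {s t a b : ℝ} (hs : 0 ≤ s) (ht : 0 ≤ t) (ha : 0 ≤ a)
    (hb : 0 ≤ b) :
    Real.sqrt s * Real.sqrt a + Real.sqrt t * Real.sqrt b ≤
      Real.sqrt (s + t) * Real.sqrt (a + b) := by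
  have hL : 0 ≤ Real.sqrt s * Real.sqrt a + Real.sqrt t * Real.sqrt b := by
    positivity
  have hR : 0 ≤ Real.sqrt (s + t) * Real.sqrt (a + b) := by positivity
  have hsq : (Real.sqrt s * Real.sqrt a + Real.sqrt t * Real.sqrt b) ^ 2 ≤
      (Real.sqrt (s + t) * Real.sqrt (a + b)) ^ 2 := by
    have e1 := Real.sq_sqrt hs
    have e2 := Real.sq_sqrt ht
    have e3 := Real.sq_sqrt ha
    have e4 := Real.sq_sqrt hb
    have e5 := Real.sq_sqrt (add_nonneg hs ht)
    have e6 := Real.sq_sqrt (add_nonneg ha hb)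
    nlinarith [sq_nonneg (Real.sqrt s * Real.sqrt b - Real.sqrt t * Real.sqrt a)]
  calc Real.sqrt s * Real.sqrt a + Real.sqrt t * Real.sqrt b
      = Real.sqrt ((Real.sqrt s * Real.sqrt a + Real.sqrt t * Real.sqrt b) ^ 2) :=
        (Real.sqrt_sq hL).symm
    _ ≤ Real.sqrt ((Real.sqrt (s + t) * Real.sqrt (a + b)) ^ 2) :=
        Real.sqrt_le_sqrt hsq
    _ = Real.sqrt (s + t) * Real.sqrt (a + b) := Real.sqrt_sq hR

/-- Duality: if `X ≤ c • Y` as quadratic forms then `Y⁻¹ ≤ c • X⁻¹`. -/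
lemma dual_ineq {X Xinv Y Yinv : V →ₗ[ℝ] V} (hX : IsSPD X) (hY : IsSPD Y)
    (hX1 : Xinv ∘ₗ X = LinearMap.id) (hX2 : X ∘ₗ Xinv = LinearMap.id)
    (hY1 : Yinv ∘ₗ Y = LinearMap.id) (hY2 : Y ∘ₗ Yinv = LinearMap.id)
    {c : ℝ} (hc : 0 ≤ c) (h : ∀ u : V, ⟪X u, u⟫ ≤ c * ⟪Y u, u⟫) (v : V) :
    ⟪Yinv v, v⟫ ≤ c * ⟪Xinv v, v⟫ := by
  have hXinv : IsSPD Xinv := hX.inv hX1 hX2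
  have hYinv : IsSPD Yinv := hY.inv hY1 hY2
  have hX2' : ∀ u : V, X (Xinv u) = u := fun u => LinearMap.ext_iff.mp hX2 u
  have hY2' : ∀ u : V, Y (Yinv u) = u := fun u => LinearMap.ext_iff.mp hY2 u
  set y := Yinv v with hy
  set p := ⟪Yinv v, v⟫ with hpdef
  set q := ⟪Xinv v, v⟫ with hqdef
  have hp : 0 ≤ p := hYinv.nonneg v
  have hq : 0 ≤ q := hXinv.nonneg v
  have step : p ≤ Real.sqrt (c * p) * Real.sqrt q := by
    have e1 : p = ⟪X y, Xinv v⟫ := by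
      calc p = ⟪y, v⟫ := rfl
        _ = ⟪y, X (Xinv v)⟫ := by rw [hX2']
        _ = ⟪X y, Xinv v⟫ := (hX.1 y (Xinv v)).symm
    have e2 : ⟪X (Xinv v), Xinv v⟫ = q := by
      rw [hX2', real_inner_comm]
    have e3 : ⟪X y, y⟫ ≤ c * p := by
      calc ⟪X y, y⟫ ≤ c * ⟪Y y, y⟫ := h y
        _ = c * p := by rw [hy, hY2', real_inner_comm]
    calc p = ⟪X y, Xinv v⟫ := e1
      _ ≤ Real.sqrt ⟪X y, y⟫ * Real.sqrt ⟪X (Xinv v), Xinv v⟫ :=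
          cs_op hX.1 hX.nonneg y (Xinv v)
      _ ≤ Real.sqrt (c * p) * Real.sqrt q := by
          rw [e2]
          exact mul_le_mul_of_nonneg_right
            (Real.sqrt_le_sqrt e3) (Real.sqrt_nonneg _)
  have step2 : p ≤ Real.sqrt p * (Real.sqrt c * Real.sqrt q) := by
    calc p ≤ Real.sqrt (c * p) * Real.sqrt q := step
      _ = Real.sqrt p * (Real.sqrt c * Real.sqrt q) := by
          rw [Real.sqrt_mul hc]; ring
  have := sq_trick hp (by positivity) step2
  calc p ≤ (Real.sqrt c * Real.sqrt q) ^ 2 := this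
    _ = c * q := by
        rw [mul_pow, Real.sq_sqrt hc, Real.sq_sqrt hq]

end Helpers

/-- The additive auxiliary space preconditioner `P_a = R̄ + Π R₀ Π*` is SPD and
is an FOV-equivalent preconditioner for any operator `B` that is coercive and
bounded with respect to `A`, with constants depending only on
`κ, C, c₀, c₁, c₂`. -/
theorem additive_preconditioner_fov_equivalence
    {V : Type*} [NormedAddCommGroup V] [InnerProductSpace ℝ V]
    [FiniteDimensional ℝ V]
    {W : Type*} [NormedAddCommGroup W] [InnerProductSpace ℝ W]
    [FiniteDimensional ℝ W]
    (A Rbar Rbarinv B : V →ₗ[ℝ] V) (R0 R0inv : W →ₗ[ℝ] W) (Pi0 : W →ₗ[ℝ] V)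
    (hA : IsSPD A) (hRbar : IsSPD Rbar) (hR0 : IsSPD R0)
    (hPi0 : Function.Injective Pi0)
    (hRbarinv₁ : Rbarinv ∘ₗ Rbar = LinearMap.id)
    (hRbarinv₂ : Rbar ∘ₗ Rbarinv = LinearMap.id)
    (hR0inv₁ : R0inv ∘ₗ R0 = LinearMap.id)
    (hR0inv₂ : R0 ∘ₗ R0inv = LinearMap.id)
    (c₀ c₁ c₂ κ C : ℝ) (hc₀ : 0 < c₀) (hc₁ : 0 < c₁) (hc₂ : 0 < c₂)
    (hκ : 0 < κ) (hC : 0 < C)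
    (hstab : ∀ v : V, ∃ v₁ : V, ∃ w : W, v = v₁ + Pi0 w ∧
      ⟪Rbarinv v₁, v₁⟫ + ⟪R0inv w, w⟫ ≤ c₀ ^ 2 * ⟪A v, v⟫)
    (hbdd₁ : ∀ w : W, ⟪A (Pi0 w), Pi0 w⟫ ≤ c₁ ^ 2 * ⟪R0inv w, w⟫)
    (hbdd₂ : ∀ v : V, ⟪A v, v⟫ ≤ c₂ ^ 2 * ⟪Rbarinv v, v⟫)
    (hcoer : ∀ v : V, κ * ⟪A v, v⟫ ≤ ⟪B v, v⟫)
    (hbddB : ∀ u v : V, ⟪B u, v⟫ ≤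
      C * Real.sqrt ⟪A u, u⟫ * Real.sqrt ⟪A v, v⟫) :
    IsSPD (Rbar + Pi0 ∘ₗ R0 ∘ₗ LinearMap.adjoint Pi0) ∧
    ∃ Painv : V →ₗ[ℝ] V,
      Painv ∘ₗ (Rbar + Pi0 ∘ₗ R0 ∘ₗ LinearMap.adjoint Pi0) = LinearMap.id ∧
      (Rbar + Pi0 ∘ₗ R0 ∘ₗ LinearMap.adjoint Pi0) ∘ₗ Painv = LinearMap.id ∧
      ∀ v : V,
        κ * c₀⁻¹ ^ 2 * ⟪Painv v, v⟫ ≤ ⟪B v, v⟫ ∧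
        Real.sqrt ⟪Painv ((Rbar + Pi0 ∘ₗ R0 ∘ₗ LinearMap.adjoint Pi0) (B v)),
            (Rbar + Pi0 ∘ₗ R0 ∘ₗ LinearMap.adjoint Pi0) (B v)⟫ ≤
          C * (c₁ ^ 2 + c₂ ^ 2) * Real.sqrt ⟪Painv v, v⟫ := by
  set Pa : V →ₗ[ℝ] V := Rbar + Pi0 ∘ₗ R0 ∘ₗ LinearMap.adjoint Pi0 with hPadef
  set Pi0s : V →ₗ[ℝ] W := LinearMap.adjoint Pi0 with hPi0s
  have hPaapp : ∀ v : V, Pa v = Rbar v + Pi0 (R0 (Pi0s v)) := fun v => rfl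
  -- adjoint identity
  have hadj : ∀ (w : W) (v : V), ⟪Pi0 w, v⟫ = ⟪w, Pi0s v⟫ := by
    intro w v
    rw [hPi0s, LinearMap.adjoint_inner_right]
  -- inner product of Pa
  have hPainner : ∀ u v : V, ⟪Pa u, v⟫ = ⟪Rbar u, v⟫ + ⟪R0 (Pi0s u), Pi0s v⟫ := by
    intro u v
    rw [hPaapp, inner_add_left, hadj]
  -- SPD of Pa
  have hPa : IsSPD Pa := by
    constructor
    · intro u v
      have h1 : ⟪Rbar u, v⟫ = ⟪Rbar v, u⟫ := by rw [hRbar.1, real_inner_comm]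
      have h2 : ⟪R0 (Pi0s u), Pi0s v⟫ = ⟪R0 (Pi0s v), Pi0s u⟫ := by
        rw [hR0.1, real_inner_comm]
      rw [hPainner, real_inner_comm (Pa v) u, hPainner, h1, h2]
    · intro v hv
      have h1 : 0 < ⟪Rbar v, v⟫ := hRbar.2 v hv
      have h2 : 0 ≤ ⟪R0 (Pi0s v), Pi0s v⟫ := hR0.nonneg _
      rw [hPainner]
      linarith
  refine ⟨hPa, ?_⟩
  obtain ⟨Painv, hPainv₁, hPainv₂⟩ := hPa.exists_inv
  obtain ⟨Ainv, hAinv₁, hAinv₂⟩ := hA.exists_inv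
  have hPainvSPD : IsSPD Painv := hPa.inv hPainv₁ hPainv₂
  have hAinvSPD : IsSPD Ainv := hA.inv hAinv₁ hAinv₂
  have hRbarinvSPD : IsSPD Rbarinv := hRbar.inv hRbarinv₁ hRbarinv₂
  have hR0invSPD : IsSPD R0inv := hR0.inv hR0inv₁ hR0inv₂
  have hPainv₂' : ∀ v : V, Pa (Painv v) = v := fun v => LinearMap.ext_iff.mp hPainv₂ v
  have hPainv₁' : ∀ v : V, Painv (Pa v) = v := fun v => LinearMap.ext_iff.mp hPainv₁ v
  have hAinv₂' : ∀ v : V, A (Ainv v) = v := fun v => LinearMap.ext_iff.mp hAinv₂ v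
  have hRbarinv₁' : ∀ v : V, Rbarinv (Rbar v) = v := fun v => LinearMap.ext_iff.mp hRbarinv₁ v
  have hR0inv₁' : ∀ w : W, R0inv (R0 w) = w := fun w => LinearMap.ext_iff.mp hR0inv₁ w
  -- KEY 1 : ⟪Painv v, v⟫ ≤ c₀² ⟪A v, v⟫
  have key1 : ∀ v : V, ⟪Painv v, v⟫ ≤ c₀ ^ 2 * ⟪A v, v⟫ := by
    intro v
    obtain ⟨v₁, w, hdec, hbound⟩ := hstab v
    set x := Painv v with hx
    set a := ⟪Rbarinv v₁, v₁⟫ with ha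
    set b := ⟪R0inv w, w⟫ with hb
    have ha0 : 0 ≤ a := hRbarinvSPD.nonneg v₁
    have hb0 : 0 ≤ b := hR0invSPD.nonneg w
    set p := ⟪Painv v, v⟫ with hp
    have hp0 : 0 ≤ p := hPainvSPD.nonneg v
    set s := ⟪Rbar x, x⟫ with hs
    set t := ⟪R0 (Pi0s x), Pi0s x⟫ with ht
    have hs0 : 0 ≤ s := hRbar.nonneg x
    have ht0 : 0 ≤ t := hR0.nonneg _
    have hst : s + t = p := by
      rw [hs, ht, ← hPainner x x, hx, hPainv₂', real_inner_comm]
    have term1 : ⟪x, v₁⟫ ≤ Real.sqrt s * Real.sqrt a := by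
      have e : ⟪x, v₁⟫ = ⟪Rbarinv (Rbar x), v₁⟫ := by rw [hRbarinv₁']
      have e2 : ⟪Rbarinv (Rbar x), Rbar x⟫ = s := by
        rw [hRbarinv₁', real_inner_comm, hs]
      calc ⟪x, v₁⟫ = ⟪Rbarinv (Rbar x), v₁⟫ := e
        _ ≤ Real.sqrt ⟪Rbarinv (Rbar x), Rbar x⟫ * Real.sqrt a :=
            cs_op hRbarinvSPD.1 hRbarinvSPD.nonneg (Rbar x) v₁
        _ = Real.sqrt s * Real.sqrt a := by rw [e2]
    have term2 : ⟪x, Pi0 w⟫ ≤ Real.sqrt t * Real.sqrt b := by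
      have e : ⟪x, Pi0 w⟫ = ⟪R0inv (R0 (Pi0s x)), w⟫ := by
        rw [hR0inv₁', real_inner_comm (Pi0 w) x, hadj, real_inner_comm]
      have e2 : ⟪R0inv (R0 (Pi0s x)), R0 (Pi0s x)⟫ = t := by
        rw [hR0inv₁', real_inner_comm, ht]
      calc ⟪x, Pi0 w⟫ = ⟪R0inv (R0 (Pi0s x)), w⟫ := e
        _ ≤ Real.sqrt ⟪R0inv (R0 (Pi0s x)), R0 (Pi0s x)⟫ * Real.sqrt b :=
            cs_op hR0invSPD.1 hR0invSPD.nonneg (R0 (Pi0s x)) w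
        _ = Real.sqrt t * Real.sqrt b := by rw [e2]
    have hsplit : p = ⟪x, v₁⟫ + ⟪x, Pi0 w⟫ := by
      have hxv : p = ⟪x, v⟫ := rfl
      rw [hxv, hdec, inner_add_right]
    have hchain : p ≤ Real.sqrt p * Real.sqrt (a + b) := by
      calc p = ⟪x, v₁⟫ + ⟪x, Pi0 w⟫ := hsplit
        _ ≤ Real.sqrt s * Real.sqrt a + Real.sqrt t * Real.sqrt b := by
            linarith
        _ ≤ Real.sqrt (s + t) * Real.sqrt (a + b) :=
            sqrt_two_term hs0 ht0 ha0 hb0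
        _ = Real.sqrt p * Real.sqrt (a + b) := by rw [hst]
    have := sq_trick hp0 (Real.sqrt_nonneg _) hchain
    rw [Real.sq_sqrt (add_nonneg ha0 hb0)] at this
    exact this.trans hbound
  -- KEY 2a : ⟪Rbar u, u⟫ ≤ c₂² ⟪Ainv u, u⟫
  have key2a : ∀ u : V, ⟪Rbar u, u⟫ ≤ c₂ ^ 2 * ⟪Ainv u, u⟫ :=
    dual_ineq hA hRbarinvSPD hAinv₁ hAinv₂ hRbarinv₂ hRbarinv₁
      (by positivity) hbdd₂
  -- KEY 2b : ⟪R0 (Π*u), Π*u⟫ ≤ c₁² ⟪Ainv u, u⟫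
  have key2b : ∀ u : V, ⟪R0 (Pi0s u), Pi0s u⟫ ≤ c₁ ^ 2 * ⟪Ainv u, u⟫ := by
    intro u
    set w := R0 (Pi0s u) with hw
    set s := ⟪R0 (Pi0s u), Pi0s u⟫ with hsdef
    set q := ⟪Ainv u, u⟫ with hqdef
    have hs0 : 0 ≤ s := hR0.nonneg _
    have hq0 : 0 ≤ q := hAinvSPD.nonneg u
    have hwinv : R0inv w = Pi0s u := by rw [hw, hR0inv₁']
    have hr0w : ⟪R0inv w, w⟫ = s := by
      rw [hwinv, real_inner_comm, hsdef, hw]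
    have estep : s ≤ Real.sqrt s * (c₁ * Real.sqrt q) := by
      have e1 : s = ⟪A (Pi0 w), Ainv u⟫ := by
        calc s = ⟪w, Pi0s u⟫ := by rw [hsdef, hw, real_inner_comm]
          _ = ⟪Pi0 w, u⟫ := (hadj w u).symm
          _ = ⟪Pi0 w, A (Ainv u)⟫ := by rw [hAinv₂']
          _ = ⟪A (Pi0 w), Ainv u⟫ := (hA.1 _ _).symm
      have e2 : ⟪A (Ainv u), Ainv u⟫ = q := by
        rw [hAinv₂', real_inner_comm, hqdef]
      have e3 : ⟪A (Pi0 w), Pi0 w⟫ ≤ c₁ ^ 2 * s := by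
        calc ⟪A (Pi0 w), Pi0 w⟫ ≤ c₁ ^ 2 * ⟪R0inv w, w⟫ := hbdd₁ w
          _ = c₁ ^ 2 * s := by rw [hr0w]
      calc s = ⟪A (Pi0 w), Ainv u⟫ := e1
        _ ≤ Real.sqrt ⟪A (Pi0 w), Pi0 w⟫ * Real.sqrt ⟪A (Ainv u), Ainv u⟫ :=
            cs_op hA.1 hA.nonneg (Pi0 w) (Ainv u)
        _ ≤ Real.sqrt (c₁ ^ 2 * s) * Real.sqrt q := by
            rw [e2]
            exact mul_le_mul_of_nonneg_right (Real.sqrt_le_sqrt e3)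
              (Real.sqrt_nonneg _)
        _ = Real.sqrt s * (c₁ * Real.sqrt q) := by
            rw [Real.sqrt_mul (by positivity), Real.sqrt_sq hc₁.le]; ring
    have := sq_trick hs0 (by positivity) estep
    calc s ≤ (c₁ * Real.sqrt q) ^ 2 := this
      _ = c₁ ^ 2 * q := by rw [mul_pow, Real.sq_sqrt hq0]
  -- KEY 2 : ⟪Pa u, u⟫ ≤ (c₁² + c₂²) ⟪Ainv u, u⟫
  have key2 : ∀ u : V, ⟪Pa u, u⟫ ≤ (c₁ ^ 2 + c₂ ^ 2) * ⟪Ainv u, u⟫ := by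
    intro u
    rw [hPainner]
    have := key2a u
    have := key2b u
    linarith
  -- KEY 3 : ⟪A v, v⟫ ≤ (c₁² + c₂²) ⟪Painv v, v⟫
  have key3 : ∀ v : V, ⟪A v, v⟫ ≤ (c₁ ^ 2 + c₂ ^ 2) * ⟪Painv v, v⟫ :=
    dual_ineq hPa hAinvSPD hPainv₁ hPainv₂ hAinv₂ hAinv₁ (by positivity) key2
  refine ⟨Painv, hPainv₁, hPainv₂, fun v => ⟨?_, ?_⟩⟩
  · -- coercivity bound
    have h1 := key1 v
    have h2 := hcoer v
    have h3 : c₀⁻¹ ^ 2 * ⟪Painv v, v⟫ ≤ ⟪A v, v⟫ := by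
      rw [inv_pow]
      rw [inv_mul_le_iff₀ (by positivity)]
      exact h1
    calc κ * c₀⁻¹ ^ 2 * ⟪Painv v, v⟫ = κ * (c₀⁻¹ ^ 2 * ⟪Painv v, v⟫) := by ring
      _ ≤ κ * ⟪A v, v⟫ := mul_le_mul_of_nonneg_left h3 hκ.le
      _ ≤ ⟪B v, v⟫ := h2
  · -- boundedness bound
    set u := B v with hu
    set q := ⟪Painv v, v⟫ with hq
    have hq0 : 0 ≤ q := hPainvSPD.nonneg v
    have hAv0 : 0 ≤ ⟪A v, v⟫ := hA.nonneg v
    -- r := ⟪Ainv u, u⟫ ≤ C² ⟪A v, v⟫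
    set r := ⟪Ainv u, u⟫ with hr
    have hr0 : 0 ≤ r := hAinvSPD.nonneg u
    have hrstep : r ≤ Real.sqrt r * (C * Real.sqrt ⟪A v, v⟫) := by
      have e2 : ⟪A (Ainv u), Ainv u⟫ = r := by
        rw [hAinv₂', real_inner_comm, hr]
      calc r = ⟪u, Ainv u⟫ := by rw [hr, real_inner_comm]
        _ = ⟪B v, Ainv u⟫ := by rw [hu]
        _ ≤ C * Real.sqrt ⟪A v, v⟫ * Real.sqrt ⟪A (Ainv u), Ainv u⟫ :=
            hbddB v (Ainv u)
        _ = Real.sqrt r * (C * Real.sqrt ⟪A v, v⟫) := by rw [e2]; ring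
    have hrC : r ≤ C ^ 2 * ⟪A v, v⟫ := by
      have := sq_trick hr0 (by positivity) hrstep
      calc r ≤ (C * Real.sqrt ⟪A v, v⟫) ^ 2 := this
        _ = C ^ 2 * ⟪A v, v⟫ := by rw [mul_pow, Real.sq_sqrt hAv0]
    -- main chain
    have hmain : ⟪Painv (Pa u), Pa u⟫ ≤ (C * (c₁ ^ 2 + c₂ ^ 2)) ^ 2 * q := by
      have e1 : ⟪Painv (Pa u), Pa u⟫ = ⟪Pa u, u⟫ := by
        rw [hPainv₁', real_inner_comm]
      calc ⟪Painv (Pa u), Pa u⟫ = ⟪Pa u, u⟫ := e1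
        _ ≤ (c₁ ^ 2 + c₂ ^ 2) * r := key2 u
        _ ≤ (c₁ ^ 2 + c₂ ^ 2) * (C ^ 2 * ⟪A v, v⟫) :=
            mul_le_mul_of_nonneg_left hrC (by positivity)
        _ ≤ (c₁ ^ 2 + c₂ ^ 2) * (C ^ 2 * ((c₁ ^ 2 + c₂ ^ 2) * q)) := by
            have := key3 v
            have hcc : (0:ℝ) ≤ (c₁ ^ 2 + c₂ ^ 2) * C ^ 2 := by positivity
            nlinarith
        _ = (C * (c₁ ^ 2 + c₂ ^ 2)) ^ 2 * q := by ring
    calc Real.sqrt ⟪Painv (Pa (B v)), Pa (B v)⟫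
        ≤ Real.sqrt ((C * (c₁ ^ 2 + c₂ ^ 2)) ^ 2 * q) := Real.sqrt_le_sqrt hmain
      _ = C * (c₁ ^ 2 + c₂ ^ 2) * Real.sqrt q := by
          rw [Real.sqrt_mul (by positivity), Real.sqrt_sq (by positivity)]
end
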